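/- arXiv:2510.26206 — 4 statements merged into one kernel-verified Lean document; each statement's English description precedes it below -/
import Mathlib

section
/- Let T be a Hom-finite Krull-Schmidt triangulated category admitting a Serre functor ν and a silting object. Then for any objects X, Y of T, the Hom-space T(X, Y[n]) vanishes for all n with |n| sufficiently large. -/
open CategoryTheory Limits Pretriangulated

universe v u

section Preamble

variable (k : Type u) [Field k]
variable (C : Type u) [Category.{v} C] [Preadditive C] [CategoryTheory.Linear k C]
  [HasZeroObject C] [HasShift C ℤ] [∀ n : ℤ, (CategoryTheory.shiftFunctor C n).Additive]
  [Pretriangulated C] [HasFiniteBiproducts C]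

/-- Hom-finiteness over `k`. -/
def HomFinite : Prop := ∀ X Y : C, FiniteDimensional k (X ⟶ Y)

variable {C}

/-- A Krull–Schmidt category: every object is a finite direct sum of objects with
local endomorphism rings. -/
def KrullSchmidt : Prop :=
  ∀ X : C, ∃ (n : ℕ) (Y : Fin n → C),
    Nonempty (X ≅ ⨁ Y) ∧ ∀ i, IsLocalRing (CategoryTheory.End (Y i))

variable {k}

/-- `X` belongs to `add M`: it is a retract of a finite direct sum of copies of `M`. -/
def inAdd (M X : C) : Prop :=
  ∃ (n : ℕ) (ι : X ⟶ ⨁ (fun _ : Fin n => M)) (ρ : ⨁ (fun _ : Fin n => M) ⟶ X),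
    ι ≫ ρ = 𝟙 X

/-- `X` belongs to `add` of a family of objects. -/
def inAddSet (P : Set C) (X : C) : Prop :=
  ∃ (n : ℕ) (Y : Fin n → C) (ι : X ⟶ ⨁ Y) (ρ : ⨁ Y ⟶ X),
    (∀ i, Y i ∈ P) ∧ ι ≫ ρ = 𝟙 X

/-- The smallest thick (triangulated, closed under direct summands) subcategory
containing `M`. -/
inductive inThick (M : C) : C → Prop
  | base : inThick M M
  | shift (X : C) (n : ℤ) : inThick M X → inThick M (X⟦n⟧)
  | retractOf (X Y : C) : inThick M Y → (∃ (i : X ⟶ Y) (r : Y ⟶ X), i ≫ r = 𝟙 X) →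
      inThick M X
  | ext2 (T : Triangle C) : T ∈ distinguishedTriangles →
      inThick M T.obj₁ → inThick M T.obj₃ → inThick M T.obj₂

/-- Silting object: presilting and generating. -/
structure IsSilting (M : C) : Prop where
  presilting : ∀ n : ℤ, 0 < n → ∀ f : M ⟶ M⟦n⟧, f = 0
  generates : ∀ X : C, inThick M X

/-- Tilting object: pretilting and generating. -/
structure IsTilting (M : C) : Prop where
  pretilting : ∀ n : ℤ, n ≠ 0 → ∀ f : M ⟶ M⟦n⟧, f = 0
  generates : ∀ X : C, inThick M X

/-- The silting partial order `M ≥ N` : `T(M, N[>0]) = 0`. -/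
def siltGE (M N : C) : Prop := ∀ n : ℤ, 0 < n → ∀ f : M ⟶ N⟦n⟧, f = 0

variable (k C)

/-- A Serre functor: an autoequivalence `F` together with a bifunctorial perfect
pairing `T(X,Y) ≅ D T(Y, F X)`. -/
structure SerreFunctor where
  F : C ⥤ C
  isEquiv : F.IsEquivalence
  pairing : ∀ X Y : C, (X ⟶ Y) ≃ₗ[k] Module.Dual k (Y ⟶ F.obj X)
  natural_left : ∀ ⦃X X' Y : C⦄ (f : X' ⟶ X) (g : X ⟶ Y) (h : Y ⟶ F.obj X'),
    pairing X' Y (f ≫ g) h = pairing X Y g (h ≫ F.map f)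
  natural_right : ∀ ⦃X Y Y' : C⦄ (g : X ⟶ Y) (e : Y ⟶ Y') (h : Y' ⟶ F.obj X),
    pairing X Y' (g ≫ e) h = pairing X Y g (e ≫ h)

variable {k C}

/-- The quasi-inverse of a Serre functor. -/
noncomputable def SerreFunctor.inv (S : SerreFunctor k C) : C ⥤ C :=
  letI := S.isEquiv
  S.F.inv

/-- `ν_d := ν ∘ [-d]` applied to an object. -/
def SerreFunctor.nud (S : SerreFunctor k C) (d : ℤ) (X : C) : C :=
  S.F.obj (X⟦(-d)⟧)

/-- `ν_d^{-1} = [d] ∘ ν^{-1}` applied to an object. -/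
noncomputable def SerreFunctor.nudInv (S : SerreFunctor k C) (d : ℤ) (X : C) : C :=
  (S.inv.obj X)⟦d⟧

/-- iterated `ν_d^{-1}`. -/
noncomputable def SerreFunctor.nudInvIter (S : SerreFunctor k C) (d : ℤ) (n : ℕ) (X : C) : C :=
  (fun Y => S.nudInv d Y)^[n] X

/-- ℤ-indexed powers of ν_d. -/
noncomputable def SerreFunctor.nudZPow (S : SerreFunctor k C) (d : ℤ) : ℤ → C → C
  | Int.ofNat n => fun X => (fun Y => S.nud d Y)^[n] X
  | Int.negSucc n => fun X => (fun Y => S.nudInv d Y)^[n + 1] X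

/-- coaisle `T_M^{≤0} = M[<0]^⊥`. -/
def TleZ (M X : C) : Prop := ∀ n : ℤ, n < 0 → ∀ f : M⟦n⟧ ⟶ X, f = 0

/-- `T_M^{≥0} = M[>0]^⊥`. -/
def TgeZ (M X : C) : Prop := ∀ n : ℤ, 0 < n → ∀ f : M⟦n⟧ ⟶ X, f = 0

/-- the heart `H_M = T_M^{≤0} ∩ T_M^{≥0}`. -/
def inHeart (M X : C) : Prop := TleZ M X ∧ TgeZ M X

/-- `(T_M^{≤0}, T_M^{≥0})` is a t-structure: every object admits a truncation
triangle `A → X → B → A[1]` with `A ∈ T_M^{≤0}` and `B ∈ T_M^{≥1}`. -/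
def HasRightAdjacentTStructure (M : C) : Prop :=
  ∀ X : C, ∃ (A B : C) (f : A ⟶ X) (g : X ⟶ B) (h : B ⟶ A⟦(1 : ℤ)⟧),
    Triangle.mk f g h ∈ distinguishedTriangles ∧ TleZ M A ∧
    (∀ n : ℤ, 0 ≤ n → ∀ φ : M⟦n⟧ ⟶ B, φ = 0)

/-- membership in `add M * add M[1] * ⋯ * add M[e]`. -/
def inStarAdd (M : C) : ℕ → C → Prop
  | 0 => fun X => inAdd M X
  | (e + 1) => fun X => ∃ (A B : C) (f : A ⟶ X) (g : X ⟶ B⟦(1 : ℤ)⟧)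
      (h : B⟦(1 : ℤ)⟧ ⟶ A⟦(1 : ℤ)⟧),
      Triangle.mk f g h ∈ distinguishedTriangles ∧ inAdd M A ∧ inStarAdd M e B

/-- `M` is `d`-silting: silting and `T(M, ν_d^{-1} M[>0]) = 0`. -/
def IsDSilting (S : SerreFunctor k C) (d : ℤ) (M : C) : Prop :=
  IsSilting M ∧ siltGE M (S.nudInv d M)

/-- left `(add N)`-approximation. -/
def IsLeftApprox (N : C) {X X₀ : C} (f : X ⟶ X₀) : Prop :=
  inAdd N X₀ ∧ ∀ Z : C, inAdd N Z → ∀ g : X ⟶ Z, ∃ t : X₀ ⟶ Z, f ≫ t = g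

/-- minimal left `(add N)`-approximation. -/
def IsMinimalLeftApprox (N : C) {X X₀ : C} (f : X ⟶ X₀) : Prop :=
  IsLeftApprox N f ∧ ∀ g : X₀ ⟶ X₀, f ≫ g = f → IsIso g

/-- right `(add M)`-approximation. -/
def IsRightApprox (M : C) {M₀ N : C} (p : M₀ ⟶ N) : Prop :=
  inAdd M M₀ ∧ ∀ Z : C, inAdd M Z → ∀ g : Z ⟶ N, ∃ t : Z ⟶ M₀, t ≫ p = g

/-- minimal right `(add M)`-approximation. -/
def IsMinimalRightApprox (M : C) {M₀ N : C} (p : M₀ ⟶ N) : Prop :=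
  IsRightApprox M p ∧ ∀ g : M₀ ⟶ M₀, g ≫ p = p → IsIso g

/-- `add M₀ ∩ add X = 0`. -/
def addDisjoint (M₀ X : C) : Prop := ∀ Z : C, inAdd M₀ Z → inAdd X Z → IsZero Z

/-- epimorphism in the heart `H_M` (vanishing of the cokernel): for all `T ∈ H_M`,
composition with `f` is injective on `Hom(B,T)`. -/
def heartEpi (M : C) {A B : C} (f : A ⟶ B) : Prop :=
  ∀ T : C, inHeart M T → ∀ g : B ⟶ T, f ≫ g = 0 → g = 0

/-- a simple object of the heart `H_M`. -/
def SimpleInHeart (M S : C) : Prop :=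
  inHeart M S ∧ ¬ IsZero S ∧ ∀ T : C, inHeart M T → ∀ f : T ⟶ S, f = 0 ∨ heartEpi M f

/-- a semisimple object of the heart. -/
def SemisimpleInHeart (M S : C) : Prop :=
  ∃ (n : ℕ) (Y : Fin n → C), (∀ i, SimpleInHeart M (Y i)) ∧ Nonempty (S ≅ ⨁ Y)

/-- `H = H⁰(X)`: there is a truncation triangle `W → X → H → W[1]` with
`W ∈ T_M^{≤ -1}` and `H ∈ H_M` (for `X ∈ T_M^{≤0}`), and `q : X ⟶ H` is the
canonical map. -/
def IsH0 (M X H : C) (q : X ⟶ H) : Prop :=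
  ∃ (W : C) (f : W ⟶ X) (h : H ⟶ W⟦(1 : ℤ)⟧),
    Triangle.mk f q h ∈ distinguishedTriangles ∧
    (∀ n : ℤ, n ≤ 0 → ∀ φ : M⟦n⟧ ⟶ W, φ = 0) ∧ inHeart M H

/-- `S = top H` in the heart: `S` is a semisimple quotient of `H` through which every
morphism to a semisimple object factors. -/
def IsTopOf (M H S : C) : Prop :=
  SemisimpleInHeart M S ∧ ∃ q : H ⟶ S, heartEpi M q ∧
    ∀ S' : C, SemisimpleInHeart M S' → ∀ g : H ⟶ S', ∃ t : S ⟶ S', q ≫ t = g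

/-- `S = top H⁰(X)`. -/
def IsTopOfH0 (M X S : C) : Prop :=
  ∃ (H : C) (q : X ⟶ H), IsH0 M X H q ∧ IsTopOf M H S

end Preamble

section Aux

variable {C : Type u} [Category.{v} C] [Preadditive C]
  [HasZeroObject C] [HasShift C ℤ] [∀ n : ℤ, (CategoryTheory.shiftFunctor C n).Additive]
  [Pretriangulated C]

/-- Eventually-positive vanishing of `Hom(X, Y⟦n⟧)`. -/
def PosVanish (X Y : C) : Prop :=
  ∃ N : ℤ, ∀ n : ℤ, N ≤ n → ∀ f : X ⟶ Y⟦n⟧, f = 0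

/-- Transfer a shifted hom vanishing. -/
lemma shift_hom_zero {A B : C} (p q m : ℤ) (hm : m = q - p)
    (h : ∀ g : A ⟶ B⟦m⟧, g = 0) (f : A⟦p⟧ ⟶ B⟦q⟧) : f = 0 := by
  have e' : A ≅ (A⟦p⟧)⟦-p⟧ := (shiftEquiv C p).unitIso.app A
  have e : ((B⟦q⟧)⟦-p⟧ : C) ≅ B⟦m⟧ :=
    ((shiftFunctorAdd' C q (-p) m (by omega)).symm).app B
  have hg := h (e'.hom ≫ (shiftFunctor C (-p)).map f ≫ e.hom)
  have h2 : (shiftFunctor C (-p)).map f = 0 := by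
    have h3 : (shiftFunctor C (-p)).map f
        = e'.inv ≫ (e'.hom ≫ (shiftFunctor C (-p)).map f ≫ e.hom) ≫ e.inv := by simp
    rw [hg] at h3
    simpa using h3
  have : (shiftFunctor C (-p)).map f = (shiftFunctor C (-p)).map 0 := by
    simpa using h2
  exact (shiftFunctor C (-p)).map_injective this

lemma posVanish_shift_left (X Y : C) (m : ℤ) (h : PosVanish X Y) :
    PosVanish (X⟦m⟧) Y := by
  obtain ⟨N, hN⟩ := h
  refine ⟨N + m, fun n hn f => ?_⟩
  have : ∀ g : X ⟶ Y⟦n - m⟧, g = 0 := fun g => hN (n - m) (by omega) g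
  exact shift_hom_zero m n (n - m) rfl this f

lemma posVanish_shift_right (X Y : C) (m : ℤ) (h : PosVanish X Y) :
    PosVanish X (Y⟦m⟧) := by
  obtain ⟨N, hN⟩ := h
  refine ⟨N - m, fun n hn f => ?_⟩
  have e : ((((Y : C)⟦m⟧)⟦n⟧ : C)) ≅ Y⟦m + n⟧ :=
    ((shiftFunctorAdd' C m n (m + n) rfl).symm).app Y
  have h0 : f ≫ e.hom = 0 := hN (m + n) (by omega) _
  have : f = (f ≫ e.hom) ≫ e.inv := by simp
  rw [this, h0]
  simp


lemma posVanish_retract_left {X Y Z : C} (i : X ⟶ Y) (r : Y ⟶ X) (hir : i ≫ r = 𝟙 X)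
    (h : PosVanish Y Z) : PosVanish X Z := by
  obtain ⟨N, hN⟩ := h
  refine ⟨N, fun n hn f => ?_⟩
  have : r ≫ f = 0 := hN n hn _
  calc f = (i ≫ r) ≫ f := by rw [hir]; simp
    _ = i ≫ (r ≫ f) := by simp
    _ = 0 := by rw [this]; simp

lemma posVanish_retract_right {X Y Z : C} (i : X ⟶ Y) (r : Y ⟶ X) (hir : i ≫ r = 𝟙 X)
    (h : PosVanish Z Y) : PosVanish Z X := by
  obtain ⟨N, hN⟩ := h
  refine ⟨N, fun n hn f => ?_⟩
  have h0 : f ≫ (shiftFunctor C n).map i = 0 := hN n hn _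
  calc f = f ≫ (shiftFunctor C n).map (𝟙 X) := by simp
    _ = f ≫ (shiftFunctor C n).map (i ≫ r) := by rw [hir]
    _ = (f ≫ (shiftFunctor C n).map i) ≫ (shiftFunctor C n).map r := by
        rw [Functor.map_comp]; simp
    _ = 0 := by rw [h0]; simp

lemma posVanish_ext2_left (T : Triangle C) (hT : T ∈ distinguishedTriangles) (Z : C)
    (h1 : PosVanish T.obj₁ Z) (h3 : PosVanish T.obj₃ Z) : PosVanish T.obj₂ Z := by
  obtain ⟨N₁, hN₁⟩ := h1
  obtain ⟨N₃, hN₃⟩ := h3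
  refine ⟨max N₁ N₃, fun n hn f => ?_⟩
  obtain ⟨g, hg⟩ := Triangle.yoneda_exact₂ T hT f (hN₁ n (le_trans (le_max_left _ _) hn) _)
  rw [hg, hN₃ n (le_trans (le_max_right _ _) hn) g]
  simp

lemma posVanish_ext2_right (T : Triangle C) (hT : T ∈ distinguishedTriangles) (Z : C)
    (h1 : PosVanish Z T.obj₁) (h3 : PosVanish Z T.obj₃) : PosVanish Z T.obj₂ := by
  obtain ⟨N₁, hN₁⟩ := h1
  obtain ⟨N₃, hN₃⟩ := h3
  refine ⟨max N₁ N₃, fun n hn f => ?_⟩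
  have hT' := Triangle.shift_distinguished T hT n
  set T' := (CategoryTheory.shiftFunctor (Triangle C) n).obj T with hT'def
  have e₁ : T'.obj₁ = T.obj₁⟦n⟧ := rfl
  have e₂ : T'.obj₂ = T.obj₂⟦n⟧ := rfl
  have e₃ : T'.obj₃ = T.obj₃⟦n⟧ := rfl
  have hf : (f ≫ T'.mor₂ : Z ⟶ T'.obj₃) = 0 := hN₃ n (le_trans (le_max_right _ _) hn) _
  obtain ⟨g, hg⟩ := Triangle.coyoneda_exact₂ T' hT' (f : Z ⟶ T'.obj₂) hf
  have hgz : g = 0 := hN₁ n (le_trans (le_max_left _ _) hn) g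
  rw [show f = g ≫ T'.mor₁ from hg, hgz]
  exact Limits.zero_comp

lemma posVanish_of_thick (M : C) (hpre : ∀ n : ℤ, 0 < n → ∀ f : M ⟶ M⟦n⟧, f = 0)
    {X Y : C} (hX : inThick M X) (hY : inThick M Y) : PosVanish X Y := by
  have hMY : PosVanish M Y := by
    induction hY with
    | base => exact ⟨1, fun n hn f => hpre n (by omega) f⟩
    | shift W m _ ih => exact posVanish_shift_right _ _ m ih
    | retractOf A B _ hr ih =>
        obtain ⟨i, r, hir⟩ := hr
        exact posVanish_retract_right i r hir ih
    | ext2 T hT _ _ ih1 ih3 => exact posVanish_ext2_right T hT M ih1 ih3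
  clear hY
  induction hX with
  | base => exact hMY
  | shift W m _ ih => exact posVanish_shift_left _ _ m ih
  | retractOf A B _ hr ih =>
      obtain ⟨i, r, hir⟩ := hr
      exact posVanish_retract_left i r hir ih
  | ext2 T hT _ _ ih1 ih3 => exact posVanish_ext2_left T hT Y ih1 ih3

end Aux

/-- In a Hom-finite Krull–Schmidt triangulated category with a Serre
functor and a silting object, `T(X, Y[n]) = 0` for `|n| ≫ 0`. -/
theorem statement0 {k : Type u} [Field k]
    {C : Type u} [Category.{v} C] [Preadditive C] [CategoryTheory.Linear k C]
    [HasZeroObject C] [HasShift C ℤ] [∀ n : ℤ, (CategoryTheory.shiftFunctor C n).Additive]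
    [Pretriangulated C] [HasFiniteBiproducts C]
    (hfin : HomFinite k C) (hKS : KrullSchmidt (C := C))
    (S : SerreFunctor k C) (M : C) (hM : IsSilting M) (X Y : C) :
    ∃ N : ℕ, ∀ n : ℤ, (N : ℤ) ≤ |n| → ∀ f : X ⟶ Y⟦n⟧, f = 0 := by
  obtain ⟨N₁, hN₁⟩ := posVanish_of_thick M hM.presilting (hM.generates X) (hM.generates Y)
  obtain ⟨N₂, hN₂⟩ := posVanish_of_thick M hM.presilting (hM.generates Y)
    (hM.generates (S.F.obj X))
  refine ⟨(max N₁ N₂).toNat, fun n hn f => ?_⟩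
  have hle := Int.self_le_toNat (max N₁ N₂)
  rcases le_or_gt 0 n with hpos | hneg
  · exact hN₁ n (by rw [abs_of_nonneg hpos] at hn; omega) f
  · -- negative case: use the Serre pairing
    have hzero : ∀ g : (Y⟦n⟧ : C) ⟶ S.F.obj X, g = 0 := by
      intro g
      have hsh : ∀ h : Y ⟶ (S.F.obj X)⟦-n⟧, h = 0 := fun h =>
        hN₂ (-n) (by rw [abs_of_neg hneg] at hn; omega) h
      have g' : (Y⟦n⟧ : C) ⟶ (S.F.obj X)⟦(0:ℤ)⟧ :=
        g ≫ ((shiftFunctorZero C ℤ).symm.app (S.F.obj X)).hom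
      have hg' : (g ≫ ((shiftFunctorZero C ℤ).symm.app (S.F.obj X)).hom :
          (Y⟦n⟧ : C) ⟶ (S.F.obj X)⟦(0:ℤ)⟧) = 0 :=
        shift_hom_zero n 0 (-n) (by ring) hsh _
      calc g = (g ≫ ((shiftFunctorZero C ℤ).symm.app (S.F.obj X)).hom) ≫
          ((shiftFunctorZero C ℤ).symm.app (S.F.obj X)).inv := by simp
        _ = 0 := by rw [hg']; simp
    have hdual : S.pairing X (Y⟦n⟧) f = 0 := by
      apply LinearMap.ext
      intro v
      rw [hzero v]
      simp
    have := congrArg (S.pairing X (Y⟦n⟧)).symm hdual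
    simpa using this
end

section
/- Let T be a Hom-finite Krull-Schmidt triangulated category with silting object M admitting a right adjacent t-structure, and let H_M be its heart. For an object U in the coaisle T_M^{≤0} and an integer d ≥ 0, the following are equivalent: (1) U lies in add M * add M[1] * ... * add M[d]; (2) T(U, H[n]) = 0 for all H in H_M and all n > d. -/
open CategoryTheory Limits Pretriangulated

universe v u

section Helpers

set_option linter.unusedSectionVars false

namespace Stmt2Aux

variable {C : Type u} [Category.{v} C] [Preadditive C]
  [HasZeroObject C] [HasShift C ℤ] [∀ n : ℤ, (CategoryTheory.shiftFunctor C n).Additive]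
  [Pretriangulated C] [HasFiniteBiproducts C]

/-- All morphisms from `X` to `Y` vanish. -/
def Van (X Y : C) : Prop := ∀ f : X ⟶ Y, f = 0

lemma van_of_isos {X X' Y Y' : C} (eX : X' ≅ X) (eY : Y ≅ Y') (h : Van X Y) : Van X' Y' := by
  intro f
  have hf : f = eX.hom ≫ (eX.inv ≫ f ≫ eY.inv) ≫ eY.hom := by simp
  rw [hf, h (eX.inv ≫ f ≫ eY.inv), zero_comp, comp_zero]

lemma van_shift {X Y : C} (n : ℤ) (h : Van X Y) : Van (X⟦n⟧) (Y⟦n⟧) := by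
  intro f
  obtain ⟨g, rfl⟩ := (shiftFunctor C n).map_surjective f
  rw [h g, Functor.map_zero]

/-- `X⟦a⟧⟦b⟧ ≅ X⟦c⟧` when `a + b = c`. -/
noncomputable def shAdd (X : C) (a b c : ℤ) (h : a + b = c) : X⟦a⟧⟦b⟧ ≅ X⟦c⟧ :=
  ((shiftFunctorAdd' C a b c h).symm.app X)

noncomputable def shZero (X : C) : X⟦(0 : ℤ)⟧ ≅ X := (shiftFunctorZero C ℤ).app X

lemma van_shift_iff {X Y : C} (n : ℤ) : Van (X⟦n⟧) (Y⟦n⟧) ↔ Van X Y := by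
  refine ⟨fun h => ?_, van_shift n⟩
  have h2 := van_shift (-n) h
  exact van_of_isos (shAdd X n (-n) 0 (by ring) ≪≫ shZero X).symm
    (shAdd Y n (-n) 0 (by ring) ≪≫ shZero Y) h2

lemma van_master {X Y : C} {a b a' b' : ℤ} (h : a - b = a' - b')
    (hv : Van (X⟦a⟧) (Y⟦b⟧)) : Van (X⟦a'⟧) (Y⟦b'⟧) := by
  have h2 := van_shift (b' - b) hv
  exact van_of_isos (shAdd X a (b' - b) a' (by omega)).symm
    (shAdd Y b (b' - b) b' (by ring)) h2

lemma van_shiftZero_src {X Y : C} : Van (X⟦(0 : ℤ)⟧) Y ↔ Van X Y :=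
  ⟨van_of_isos (shZero X).symm (Iso.refl Y), van_of_isos (shZero X) (Iso.refl Y)⟩

lemma van_shiftZero_tgt {X Y : C} : Van X (Y⟦(0 : ℤ)⟧) ↔ Van X Y :=
  ⟨van_of_isos (Iso.refl X) (shZero Y), van_of_isos (Iso.refl X) (shZero Y).symm⟩

/-- Move a shift from the target to the source. -/
lemma van_twist {X Y : C} (n : ℤ) : Van X (Y⟦n⟧) ↔ Van (X⟦-n⟧) Y := by
  constructor
  · intro h
    exact van_shiftZero_tgt.mp (van_master (a := 0) (b := n) (by ring)
      (van_shiftZero_src.mpr h))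
  · intro h
    exact van_shiftZero_src.mp (van_master (a := -n) (b := 0) (by ring)
      (van_shiftZero_tgt.mpr h))

/-- Move a shift from the source to the target. -/
lemma van_twist' {X Y : C} (n : ℤ) : Van (X⟦n⟧) Y ↔ Van X (Y⟦-n⟧) := by
  rw [van_twist, neg_neg]

lemma van_shiftAdd_src {X Y : C} (a b c : ℤ) (h : a + b = c) :
    Van (X⟦a⟧⟦b⟧) Y ↔ Van (X⟦c⟧) Y :=
  ⟨van_of_isos (shAdd X a b c h).symm (Iso.refl Y),
   van_of_isos (shAdd X a b c h) (Iso.refl Y)⟩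

/-! ### `add` lemmas -/

lemma van_src_of_inAdd {N A Y : C} (hA : inAdd N A) (h : Van N Y) : Van A Y := by
  obtain ⟨n, ι, ρ, hir⟩ := hA
  intro f
  have hz : ρ ≫ f = 0 := by
    apply biproduct.hom_ext'
    intro j
    rw [comp_zero]
    exact h _
  calc f = ι ≫ ρ ≫ f := by rw [← Category.assoc, hir, Category.id_comp]
  _ = 0 := by rw [hz, comp_zero]

lemma van_tgt_of_inAdd {N A X : C} (hA : inAdd N A) (h : Van X N) : Van X A := by
  obtain ⟨n, ι, ρ, hir⟩ := hA
  intro f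
  have hz : f ≫ ι = 0 := by
    apply biproduct.hom_ext
    intro j
    rw [zero_comp, Category.assoc]
    exact h _
  calc f = (f ≫ ι) ≫ ρ := by rw [Category.assoc, hir, Category.comp_id]
  _ = 0 := by rw [hz, zero_comp]

lemma van_src_of_inAdd_shift {N A Y : C} (hA : inAdd N A) {n : ℤ}
    (h : Van (N⟦n⟧) Y) : Van (A⟦n⟧) Y := by
  rw [van_twist'] at h ⊢
  exact van_src_of_inAdd hA h

lemma van_tgt_of_inAdd_shift {N A X : C} (hA : inAdd N A) {n : ℤ}
    (h : Van X (N⟦n⟧)) : Van X (A⟦n⟧) := by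
  rw [van_twist] at h ⊢
  exact van_tgt_of_inAdd hA h

lemma inAdd_retract {N A B : C} (hB : inAdd N B) (i : A ⟶ B) (r : B ⟶ A)
    (hir : i ≫ r = 𝟙 A) : inAdd N A := by
  obtain ⟨n, ι, ρ, h⟩ := hB
  refine ⟨n, i ≫ ι, ρ ≫ r, ?_⟩
  rw [Category.assoc, ← Category.assoc ι, h, Category.id_comp, hir]

/-! ### silting and heart vanishing -/

variable {M : C}

lemma van_silting (hM : IsSilting M) {a b : ℤ} (hab : a < b) : Van (M⟦a⟧) (M⟦b⟧) := by
  have h0 : Van M (M⟦b - a⟧) := fun f => hM.presilting _ (by omega) f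
  exact van_of_isos (Iso.refl _) (shAdd M (b - a) a b (by ring)) (van_shift a h0)

lemma van_heart (hH : inHeart M H) {n : ℤ} (hn : n ≠ 0) : Van (M⟦n⟧) H := by
  rcases lt_or_gt_of_ne hn with h | h
  · exact fun f => hH.1 n h f
  · exact fun f => hH.2 n h f

lemma van_heart_shift (hH : inHeart M H) {j n : ℤ} (hjn : j ≠ n) :
    Van (M⟦j⟧) (H⟦n⟧) := by
  refine van_master (a := j - n) (b := 0) (by ring) ?_
  rw [van_shiftZero_tgt]
  exact van_heart hH (by omega)

lemma van_M_heart_shift (hH : inHeart M H) {n : ℤ} (hn : n ≠ 0) : Van M (H⟦n⟧) := by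
  rw [van_twist]
  exact van_heart hH (by omega)

/-! ### t-structure bounds -/

/-- `Tle M m X` means `X ∈ T_M^{≤ -m}`. -/
def Tle (M : C) (m : ℤ) (X : C) : Prop := ∀ j : ℤ, j < m → Van (M⟦j⟧) X

lemma tle_of_tleZ {X : C} (h : TleZ M X) : Tle M 0 X := fun j hj f => h j hj f

lemma tleZ_of_tle {X : C} (h : Tle M 0 X) : TleZ M X := fun j hj f => h j hj f

section WithLinear

variable {k : Type u} [Field k] [CategoryTheory.Linear k C]

/-- Approximation triangle: for `U ∈ T_M^{≤0}` there is a distinguished triangle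
`M₀ → U → W → M₀⟦1⟧` with `M₀ ∈ add M` and `W ∈ T_M^{≤ -1}`. -/
lemma approx (hfin : HomFinite k C) (hM : IsSilting M) {U : C} (hU : TleZ M U) :
    ∃ (M₀ W : C) (p : M₀ ⟶ U) (q : U ⟶ W) (r : W ⟶ M₀⟦(1 : ℤ)⟧),
      Triangle.mk p q r ∈ distinguishedTriangles ∧ inAdd M M₀ ∧ Tle M 1 W := by
  haveI : FiniteDimensional k (M ⟶ U) := hfin M U
  set n := Module.finrank k (M ⟶ U) with hn
  let b : Module.Basis (Fin n) k (M ⟶ U) := Module.finBasis k (M ⟶ U)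
  set M₀ : C := ⨁ (fun _ : Fin n => M) with hM₀def
  have hM₀ : inAdd M M₀ := ⟨n, 𝟙 M₀, 𝟙 M₀, Category.id_comp _⟩
  let p : M₀ ⟶ U := biproduct.desc (fun i => b i)
  have happrox : ∀ g : M ⟶ U, ∃ t : M ⟶ M₀, t ≫ p = g := by
    intro g
    refine ⟨biproduct.lift (fun i => b.repr g i • 𝟙 M), ?_⟩
    rw [show biproduct.lift (fun i => b.repr g i • 𝟙 M) ≫ p
        = ∑ i, (b.repr g i • 𝟙 M) ≫ b i from biproduct.lift_desc]
    simp only [Linear.smul_comp, Category.id_comp]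
    exact b.sum_repr g
  obtain ⟨W, q, r, hT⟩ := Pretriangulated.distinguished_cocone_triangle p
  refine ⟨M₀, W, p, q, r, hT, hM₀, ?_⟩
  intro j hj f
  have h1 : f ≫ r = 0 := by
    have hv : Van (M⟦j⟧) (M₀⟦(1 : ℤ)⟧) :=
      van_tgt_of_inAdd_shift hM₀ (van_silting hM (by omega))
    exact hv (f ≫ r)
  obtain ⟨g, hg⟩ := Triangle.coyoneda_exact₃ _ hT f h1
  rcases lt_or_eq_of_le (show j ≤ 0 by omega) with hj0 | hj0
  · rw [hg, hU j hj0 g]; exact zero_comp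
  · subst hj0
    obtain ⟨t, ht⟩ := happrox ((shZero M).inv ≫ g)
    have hg' : g = (shZero M).hom ≫ t ≫ p := by
      rw [ht]; simp
    have hpq : p ≫ q = 0 := comp_distTriang_mor_zero₁₂ _ hT
    rw [hg, hg']
    simp only [Triangle.mk_mor₂, Category.assoc, hpq, comp_zero]
    exact (Category.assoc _ _ _).trans ((congrArg (fun x => (shZero M).hom ≫ x) ((Category.assoc _ _ _).trans ((congrArg (fun x => t ≫ x) hpq).trans comp_zero))).trans comp_zero)

end WithLinear

/-- Each object `U` of `T = thick(M)` kills all of `T_M^{≤ -N}` for some `N`. -/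
lemma bounded (hM : IsSilting M) (U : C) : ∃ N : ℤ, ∀ X : C, Tle M N X → Van U X := by
  induction hM.generates U with
  | base =>
    refine ⟨1, fun X hX => ?_⟩
    rw [← van_shiftZero_src]
    exact hX 0 (by omega)
  | shift X m _ ih =>
    obtain ⟨N, hN⟩ := ih
    refine ⟨N + m, fun Y hY => ?_⟩
    rw [van_twist']
    refine hN _ (fun j hj => ?_)
    refine van_master (a := j + m) (b := 0) (by ring) ?_
    rw [van_shiftZero_tgt]
    exact hY (j + m) (by omega)
  | retractOf X Y _ hre ih =>
    obtain ⟨N, hN⟩ := ih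
    obtain ⟨i, r, hir⟩ := hre
    refine ⟨N, fun Z hZ f => ?_⟩
    have : r ≫ f = 0 := hN Z hZ (r ≫ f)
    rw [show f = i ≫ r ≫ f by rw [← Category.assoc, hir, Category.id_comp], this,
      comp_zero]
  | ext2 T hT _ _ ih1 ih3 =>
    obtain ⟨N₁, hN₁⟩ := ih1
    obtain ⟨N₃, hN₃⟩ := ih3
    refine ⟨max N₁ N₃, fun X hX f => ?_⟩
    have h1 : T.mor₁ ≫ f = 0 :=
      hN₁ X (fun j hj => hX j (by omega)) (T.mor₁ ≫ f)
    obtain ⟨g, hg⟩ := Triangle.yoneda_exact₂ _ hT f h1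
    rw [hg, hN₃ X (fun j hj => hX j (by omega)) g, comp_zero]

/-- Truncation: for `X ∈ T_M^{≤ -k}` there is a triangle `X' → X → H⟦k⟧ → X'⟦1⟧`
with `X' ∈ T_M^{≤ -(k+1)}` and `H ∈ H_M`. -/
lemma truncation (hAdj : HasRightAdjacentTStructure M) (k : ℤ) (X : C)
    (hX : Tle M k X) :
    ∃ (X' H : C) (f : X' ⟶ X) (g : X ⟶ H⟦k⟧) (h : H⟦k⟧ ⟶ X'⟦(1 : ℤ)⟧),
      Triangle.mk f g h ∈ distinguishedTriangles ∧ Tle M (k + 1) X' ∧ inHeart M H := by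
  obtain ⟨A, B, a, b, c, hT, hA, hB⟩ := hAdj (X⟦(-(k + 1) : ℤ)⟧)
  -- vanishing for the middle term
  have hmid : ∀ j : ℤ, j < -1 → Van (M⟦j⟧) (X⟦(-(k + 1) : ℤ)⟧) := by
    intro j hj
    refine van_master (a := j + k + 1) (b := 0) (by ring) ?_
    rw [van_shiftZero_tgt]
    exact hX (j + k + 1) (by omega)
  -- vanishing for B
  have hBlow : ∀ j : ℤ, j < -1 → Van (M⟦j⟧) B := by
    intro j hj f
    have h1 : f ≫ c = 0 := by
      have hv : Van (M⟦j⟧) (A⟦(1 : ℤ)⟧) := by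
        refine van_master (a := j - 1) (b := 0) (by ring) ?_
        rw [van_shiftZero_tgt]
        exact hA (j - 1) (by omega)
      exact hv (f ≫ c)
    obtain ⟨g, hg⟩ := Triangle.coyoneda_exact₃ _ hT f h1
    rw [hg, hmid j hj g]; exact zero_comp
  have hH : inHeart M (B⟦(1 : ℤ)⟧) := by
    constructor
    · intro m hm
      have : Van (M⟦m⟧) (B⟦(1 : ℤ)⟧) := by
        refine van_master (a := m - 1) (b := 0) (by ring) ?_
        rw [van_shiftZero_tgt]
        exact hBlow (m - 1) (by omega)
      exact this
    · intro m hm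
      have : Van (M⟦m⟧) (B⟦(1 : ℤ)⟧) := by
        refine van_master (a := m - 1) (b := 0) (by ring) ?_
        rw [van_shiftZero_tgt]
        exact fun f => hB (m - 1) (by omega) f
      exact this
  -- shift the truncation triangle by k + 1
  have hT' := Triangle.shift_distinguished _ hT (k + 1)
  set T' := (CategoryTheory.shiftFunctor (Triangle C) (k + 1)).obj (Triangle.mk a b c)
    with hT'def
  have hobj₁ : T'.obj₁ = A⟦(k + 1 : ℤ)⟧ := rfl
  have hobj₂ : T'.obj₂ = (X⟦(-(k + 1) : ℤ)⟧)⟦(k + 1 : ℤ)⟧ := rfl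
  have hobj₃ : T'.obj₃ = B⟦(k + 1 : ℤ)⟧ := rfl
  let e₂ : (X⟦(-(k + 1) : ℤ)⟧)⟦(k + 1 : ℤ)⟧ ≅ X :=
    shAdd X (-(k + 1)) (k + 1) 0 (by ring) ≪≫ shZero X
  let e₃ : B⟦(k + 1 : ℤ)⟧ ≅ (B⟦(1 : ℤ)⟧)⟦(k : ℤ)⟧ := (shAdd B 1 k (k + 1) (by ring)).symm
  refine ⟨A⟦(k + 1 : ℤ)⟧, B⟦(1 : ℤ)⟧, T'.mor₁ ≫ e₂.hom, e₂.inv ≫ T'.mor₂ ≫ e₃.hom,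
    e₃.inv ≫ T'.mor₃, ?_, ?_, hH⟩
  · refine isomorphic_distinguished _ hT' _ ?_
    refine Triangle.isoMk _ _ (Iso.refl _) e₂.symm e₃.symm ?_ ?_ ?_
    · dsimp; exact (Category.assoc _ _ _).trans ((congrArg (fun x => T'.mor₁ ≫ x) e₂.hom_inv_id).trans ((Category.comp_id _).trans (Category.id_comp _).symm))
    · dsimp; exact (Category.assoc _ _ _).trans (congrArg (fun x => e₂.inv ≫ x) ((Category.assoc _ _ _).trans ((congrArg (fun x => T'.mor₂ ≫ x) e₃.hom_inv_id).trans (Category.comp_id _))))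
    · dsimp; exact (congrArg (fun x => (e₃.inv ≫ T'.mor₃) ≫ x) ((shiftFunctor C 1).map_id _)).trans (Category.comp_id _)
  · intro j hj
    refine van_master (a := j - (k + 1)) (b := 0) (by ring) ?_
    rw [van_shiftZero_tgt]
    exact hA (j - (k + 1)) (by omega)

/-- If `U` kills `H_M[>0]` then `U` kills all of `T_M^{≤ -1}`. -/
lemma vanOfTle (hM : IsSilting M) (hAdj : HasRightAdjacentTStructure M) {U : C}
    (hh : ∀ H : C, inHeart M H → ∀ n : ℤ, 0 < n → Van U (H⟦n⟧)) :
    ∀ X : C, Tle M 1 X → Van U X := by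
  obtain ⟨N, hN⟩ := bounded hM U
  have aux : ∀ m : ℕ, ∀ kk : ℤ, 1 ≤ kk → N ≤ kk + m → ∀ X : C, Tle M kk X → Van U X := by
    intro m
    induction m with
    | zero =>
      intro kk hk hNk X hX
      exact hN X (fun j hj => hX j (by omega))
    | succ m ih =>
      intro kk hk hNk X hX
      by_cases hc : N ≤ kk
      · exact hN X (fun j hj => hX j (by omega))
      · obtain ⟨X', H, f, g, h, hT, hX', hH⟩ := truncation hAdj kk X hX
        intro φ
        have h1 : φ ≫ g = 0 := hh H hH kk (by omega) (φ ≫ g)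
        obtain ⟨ψ, hψ⟩ := Triangle.coyoneda_exact₂ _ hT φ h1
        rw [hψ, ih (kk + 1) (by omega) (by omega) X' hX' ψ]; exact zero_comp
  intro X hX
  exact aux (N - 1).toNat 1 le_rfl (by omega) X hX

/-- Forward direction. -/
lemma fwd (hM : IsSilting M) :
    ∀ d : ℕ, ∀ U : C, inStarAdd M d U →
      ∀ H : C, inHeart M H → ∀ n : ℤ, (d : ℤ) < n → Van U (H⟦n⟧) := by
  intro d
  induction d with
  | zero =>
    intro U hU H hH n hn
    exact van_src_of_inAdd hU (van_M_heart_shift hH (by push_cast at hn; omega))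
  | succ d ih =>
    intro U hU H hH n hn
    obtain ⟨A, B, f₀, g₀, h₀, hT, hA, hB⟩ := hU
    intro φ
    have h1 : f₀ ≫ φ = 0 :=
      van_src_of_inAdd hA (van_M_heart_shift hH (by push_cast at hn; omega)) (f₀ ≫ φ)
    obtain ⟨ψ, hψ⟩ := Triangle.yoneda_exact₂ _ hT φ h1
    have hz : Van (B⟦(1 : ℤ)⟧) (H⟦n⟧) := by
      refine van_master (a := 0) (b := n - 1) (by ring) ?_
      rw [van_shiftZero_src]
      exact ih B hB H hH (n - 1) (by push_cast at hn ⊢; omega)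
    rw [hψ, hz ψ]; exact comp_zero

section WithLinear2

variable {k : Type u} [Field k] [CategoryTheory.Linear k C]

/-- Backward direction. -/
lemma bwd (hfin : HomFinite k C) (hM : IsSilting M)
    (hAdj : HasRightAdjacentTStructure M) :
    ∀ d : ℕ, ∀ U : C, TleZ M U →
      (∀ H : C, inHeart M H → ∀ n : ℤ, (d : ℤ) < n → Van U (H⟦n⟧)) →
      inStarAdd M d U := by
  intro d
  induction d with
  | zero =>
    intro U hU hh
    obtain ⟨M₀, W, p, q, r, hT, hM₀, hW⟩ := approx hfin hM hU
    have hq : q = 0 :=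
      vanOfTle hM hAdj (fun H hH n hn => hh H hH n (by push_cast; omega)) W hW q
    obtain ⟨s, hs⟩ := Triangle.coyoneda_exact₂ _ hT (𝟙 U) (by
      simp only [Triangle.mk_mor₂, hq, comp_zero]; exact comp_zero)
    obtain ⟨m, ι, ρ, hir⟩ := hM₀
    refine ⟨m, s ≫ ι, ρ ≫ p, ?_⟩
    have hcalc : (s ≫ ι) ≫ ρ ≫ p = s ≫ p := by
      exact (Category.assoc _ _ _).trans (congrArg (fun x => s ≫ x) ((Category.assoc _ _ _).symm.trans ((congrArg (fun x => x ≫ p) hir).trans (Category.id_comp _))))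
    rw [hcalc]
    exact hs.symm
  | succ d ih =>
    intro U hU hh
    obtain ⟨M₀, W, p, q, r, hT, hM₀, hW⟩ := approx hfin hM hU
    have hVle : TleZ M (W⟦(-1 : ℤ)⟧) := by
      intro j hj
      have hv : Van (M⟦j⟧) (W⟦(-1 : ℤ)⟧) := by
        refine van_master (a := j + 1) (b := 0) (by ring) ?_
        rw [van_shiftZero_tgt]
        exact hW (j + 1) (by omega)
      exact hv
    have hWh : ∀ H : C, inHeart M H → ∀ n : ℤ, (d : ℤ) + 1 < n → Van W (H⟦n⟧) := by
      intro H hH n hn φ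
      have h1 : q ≫ φ = 0 := hh H hH n (by push_cast; omega) (q ≫ φ)
      obtain ⟨ψ, hψ⟩ := Triangle.yoneda_exact₃ _ hT φ h1
      have hz : Van (M₀⟦(1 : ℤ)⟧) (H⟦n⟧) :=
        van_src_of_inAdd_shift hM₀ (van_heart_shift hH (by omega))
      rw [hψ, hz ψ]; exact comp_zero
    have hVh : ∀ H : C, inHeart M H → ∀ n : ℤ, (d : ℤ) < n →
        Van (W⟦(-1 : ℤ)⟧) (H⟦n⟧) := by
      intro H hH n hn
      refine van_master (a := 0) (b := n + 1) (by ring) ?_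
      rw [van_shiftZero_src]
      exact hWh H hH (n + 1) (by omega)
    have hV := ih (W⟦(-1 : ℤ)⟧) hVle hVh
    let e : (W⟦(-1 : ℤ)⟧)⟦(1 : ℤ)⟧ ≅ W := shAdd W (-1) 1 0 (by ring) ≪≫ shZero W
    refine ⟨M₀, W⟦(-1 : ℤ)⟧, p, q ≫ e.inv, e.hom ≫ r, ?_, hM₀, hV⟩
    refine isomorphic_distinguished _ hT _ ?_
    refine Triangle.isoMk _ _ (Iso.refl _) (Iso.refl _) e ?_ ?_ ?_
    · dsimp; exact (Category.comp_id _).trans (Category.id_comp _).symm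
    · dsimp; exact (Category.assoc _ _ _).trans ((congrArg (fun x => q ≫ x) e.inv_hom_id).trans ((Category.comp_id _).trans (Category.id_comp _).symm))
    · dsimp; exact (congrArg (fun x => (e.hom ≫ r) ≫ x) ((shiftFunctor C 1).map_id _)).trans (Category.comp_id _)

end WithLinear2

end Stmt2Aux

end Helpers

/-- for `U ∈ T_M^{≤0}` and `d ≥ 0`:
`U ∈ add M * add M[1] * ⋯ * add M[d]` iff `T(U, H[>d]) = 0` for all `H ∈ H_M`. -/
theorem statement2 {k : Type u} [Field k]
    {C : Type u} [Category.{v} C] [Preadditive C] [CategoryTheory.Linear k C]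
    [HasZeroObject C] [HasShift C ℤ] [∀ n : ℤ, (CategoryTheory.shiftFunctor C n).Additive]
    [Pretriangulated C] [HasFiniteBiproducts C]
    (hfin : HomFinite k C) (hKS : KrullSchmidt (C := C))
    (S : SerreFunctor k C) (M : C) (hM : IsSilting M)
    (hAdj : HasRightAdjacentTStructure M)
    (U : C) (hU : TleZ M U) (d : ℕ) :
    inStarAdd M d U ↔
      (∀ H : C, inHeart M H → ∀ n : ℤ, (d : ℤ) < n → ∀ f : U ⟶ H⟦n⟧, f = 0) := by
  constructor
  · intro h H hH n hn f
    exact Stmt2Aux.fwd hM d U h H hH n hn f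
  · intro h
    exact Stmt2Aux.bwd hfin hM hAdj d U hU (fun H hH n hn f => h H hH n hn f)
end

section
/- Let T be a Hom-finite Krull-Schmidt triangulated category with Serre functor ν, M a silting object admitting a right adjacent t-structure with heart H_M, and d an integer. The following are equivalent: (1) M is d-silting, i.e. T(M, ν⁻¹M[n]) = 0 for all n > d; (2) T(H, H'[n]) = 0 for all H, H' in H_M and n > d; (3) H_M ⊆ add M * add M[1] * ... * add M[d]; (4) ν_d(T_M^{≥0}) ⊆ T_M^{≥0}; (5) ν_d^{-1}(T_M^{≤0}) ⊆ T_M^{≤0}, where ν_d = ν ∘ [-d]. -/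
open CategoryTheory Limits Pretriangulated

universe v u

set_option linter.unusedSectionVars false
set_option maxHeartbeats 1000000

section Aux
variable {k : Type u} [Field k]
variable {C : Type u} [Category.{v} C] [Preadditive C] [CategoryTheory.Linear k C]
  [HasZeroObject C] [HasShift C ℤ] [∀ n : ℤ, (CategoryTheory.shiftFunctor C n).Additive]
  [Pretriangulated C] [HasFiniteBiproducts C]

/-- all morphisms `A ⟶ B` vanish. -/
def Zr (A B : C) : Prop := ∀ f : A ⟶ B, f = 0

lemma zr_iff_subsingleton (A B : C) : Zr A B ↔ Subsingleton (A ⟶ B) := by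
  constructor
  · intro h; exact ⟨fun f g => by rw [h f, h g]⟩
  · intro h f; exact Subsingleton.elim f 0

lemma Zr.of_iso_left {A A' B : C} (e : A ≅ A') (h : Zr A B) : Zr A' B := fun f => by
  have : e.hom ≫ f = 0 := h _
  calc f = e.inv ≫ (e.hom ≫ f) := by simp
  _ = 0 := by rw [this, Limits.comp_zero]

lemma Zr.of_iso_right {A B B' : C} (e : B ≅ B') (h : Zr A B) : Zr A B' := fun f => by
  have : f ≫ e.inv = 0 := h _
  calc f = (f ≫ e.inv) ≫ e.hom := by simp
  _ = 0 := by rw [this, Limits.zero_comp]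

lemma zr_shift_both (s : ℤ) {A B : C} : Zr A B ↔ Zr (A⟦s⟧) (B⟦s⟧) := by
  constructor
  · intro h f
    obtain ⟨g, rfl⟩ := (shiftFunctor C s).map_surjective f
    rw [h g, Functor.map_zero]
  · intro h f
    apply (shiftFunctor C s).map_injective
    rw [h ((shiftFunctor C s).map f), Functor.map_zero]

/-- `X⟦a⟧⟦b⟧ ≅ X⟦a+b⟧` -/
noncomputable def shAdd (X : C) (a b : ℤ) : X⟦a⟧⟦b⟧ ≅ X⟦a + b⟧ :=
  ((shiftFunctorAdd C a b).symm.app X)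

/-- `X⟦a⟧⟦-a⟧ ≅ X` -/
noncomputable def shCancel (X : C) (a : ℤ) : X⟦a⟧⟦-a⟧ ≅ X :=
  (shiftFunctorCompIsoId C a (-a) (by ring)).app X

lemma zr_shift_left {A B : C} (a : ℤ) : Zr (A⟦a⟧) B ↔ Zr A (B⟦-a⟧) := by
  constructor
  · intro h
    exact ((zr_shift_both (-a)).1 h).of_iso_left (shCancel A a)
  · intro h
    have := (zr_shift_both a).1 h
    exact this.of_iso_right ((shiftFunctorCompIsoId C (-a) a (by ring)).app B)

lemma zr_shift_right {A B : C} (a : ℤ) : Zr A (B⟦a⟧) ↔ Zr (A⟦-a⟧) B := by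
  rw [zr_shift_left, show - -a = a by ring]

lemma subsingleton_dual_iff (V : Type*) [AddCommGroup V] [Module k V] :
    Subsingleton (Module.Dual k V) ↔ Subsingleton V := by
  constructor
  · intro h
    refine subsingleton_of_forall_eq 0 (fun v => ?_)
    rw [← Module.forall_dual_apply_eq_zero_iff k v]
    intro φ
    rw [Subsingleton.elim φ 0]
    rfl
  · intro h
    refine subsingleton_of_forall_eq 0 (fun φ => ?_)
    ext v
    rw [Subsingleton.elim v 0, map_zero]
    rfl

/-- Serre pairing swap: `Zr A B ↔ Zr B (νA)`. -/
lemma zr_serre (S : SerreFunctor k C) (A B : C) : Zr A B ↔ Zr B (S.F.obj A) := by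
  rw [zr_iff_subsingleton, zr_iff_subsingleton]
  rw [(Equiv.subsingleton_congr (S.pairing A B).toEquiv)]
  exact subsingleton_dual_iff _

/-- counit iso `ν (ν⁻¹ B) ≅ B`. -/
noncomputable def nuCounit (S : SerreFunctor k C) (B : C) : S.F.obj (S.inv.obj B) ≅ B :=
  letI := S.isEquiv
  S.F.asEquivalence.counitIso.app B

/-- `Zr (ν⁻¹ B) A ↔ Zr A B`. -/
lemma zr_serre_inv (S : SerreFunctor k C) (A B : C) : Zr (S.inv.obj B) A ↔ Zr A B := by
  rw [zr_serre S (S.inv.obj B) A]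
  constructor
  · intro h; exact h.of_iso_right (nuCounit S B)
  · intro h; exact h.of_iso_right (nuCounit S B).symm

/-- fully faithful transport along ν. -/
lemma zr_nu_both (S : SerreFunctor k C) (A B : C) :
    Zr A B ↔ Zr (S.F.obj A) (S.F.obj B) := by
  letI := S.isEquiv
  constructor
  · intro h f
    obtain ⟨g, rfl⟩ := S.F.map_surjective f
    rw [h g, Functor.map_zero]
  · intro h f
    apply S.F.map_injective
    rw [h (S.F.map f), Functor.map_zero]

/-- `DT X Y Z`: there is a distinguished triangle `X → Y → Z → X⟦1⟧`. -/
def DT (X Y Z : C) : Prop := ∃ (f : X ⟶ Y) (g : Y ⟶ Z) (h : Z ⟶ X⟦(1:ℤ)⟧),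
  Triangle.mk f g h ∈ distinguishedTriangles

lemma DT.rot {X Y Z : C} (h : DT X Y Z) : DT Y Z (X⟦(1:ℤ)⟧) := by
  obtain ⟨f, g, e, hT⟩ := h
  exact ⟨_, _, _, rot_of_distTriang _ hT⟩

lemma DT.shift {X Y Z : C} (h : DT X Y Z) (s : ℤ) : DT (X⟦s⟧) (Y⟦s⟧) (Z⟦s⟧) := by
  obtain ⟨f, g, e, hT⟩ := h
  exact ⟨_, _, _, Pretriangulated.Triangle.shift_distinguished _ hT s⟩

lemma DT.of_iso₃ {X Y Z Z' : C} (h : DT X Y Z) (e : Z ≅ Z') : DT X Y Z' := by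
  obtain ⟨f, g, w, hT⟩ := h
  refine ⟨f, g ≫ e.hom, e.inv ≫ w, isomorphic_distinguished _ hT _ ?_⟩
  exact Triangle.isoMk _ _ (Iso.refl _) (Iso.refl _) e.symm (by simp [Triangle.mk]) (by simp [Triangle.mk]) (by simp [Triangle.mk])

lemma DT.of_iso₂ {X Y Y' Z : C} (h : DT X Y Z) (e : Y ≅ Y') : DT X Y' Z := by
  obtain ⟨f, g, w, hT⟩ := h
  refine ⟨f ≫ e.hom, e.inv ≫ g, w, isomorphic_distinguished _ hT _ ?_⟩
  exact Triangle.isoMk _ _ (Iso.refl _) e.symm (Iso.refl _) (by simp [Triangle.mk]) (by simp [Triangle.mk]) (by simp [Triangle.mk])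

lemma DT.of_iso₁ {X X' Y Z : C} (h : DT X Y Z) (e : X ≅ X') : DT X' Y Z := by
  obtain ⟨f, g, w, hT⟩ := h
  refine ⟨e.inv ≫ f, g, w ≫ e.hom⟦(1:ℤ)⟧', isomorphic_distinguished _ hT _ ?_⟩
  exact Triangle.isoMk _ _ e.symm (Iso.refl _) (Iso.refl _) (by simp [Triangle.mk]) (by simp [Triangle.mk])
    (by simp [Triangle.mk, ← Functor.map_comp])

lemma DT.invRot {X Y Z : C} (h : DT X Y Z) : DT (Z⟦(-1:ℤ)⟧) X Y := by
  obtain ⟨f, g, e, hT⟩ := h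
  exact ⟨_, _, _, inv_rot_of_distTriang _ hT⟩

lemma dt_cocone {X Y : C} (f : X ⟶ Y) : ∃ (Z : C) (g : Y ⟶ Z) (h : Z ⟶ X⟦(1:ℤ)⟧),
    Triangle.mk f g h ∈ distinguishedTriangles := by
  obtain ⟨Z, g, h, hT⟩ := Pretriangulated.distinguished_cocone_triangle f
  exact ⟨Z, g, h, hT⟩


lemma DT.zr_mid {X Y Z : C} (h : DT X Y Z) {W : C} (h1 : Zr W X) (h3 : Zr W Z) : Zr W Y := by
  obtain ⟨f, g, e, hT⟩ := h
  intro φ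
  obtain ⟨ψ, hψ⟩ := Triangle.coyoneda_exact₂ _ hT φ (h3 _)
  rw [hψ, h1 ψ]; exact Limits.zero_comp

lemma DT.zr_third {X Y Z : C} (h : DT X Y Z) {W : C} (h2 : Zr W Y) (h1 : Zr W (X⟦(1:ℤ)⟧)) :
    Zr W Z := h.rot.zr_mid h2 h1

lemma DT.zr_first {X Y Z : C} (h : DT X Y Z) {W : C} (h3 : Zr W (Z⟦(-1:ℤ)⟧)) (h2 : Zr W Y) :
    Zr W X := h.invRot.zr_mid h3 h2

lemma DT.rz_mid {X Y Z : C} (h : DT X Y Z) {W : C} (h3 : Zr Z W) (h1 : Zr X W) : Zr Y W := by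
  obtain ⟨f, g, e, hT⟩ := h
  intro φ
  obtain ⟨ψ, hψ⟩ := Triangle.yoneda_exact₂ _ hT φ (h1 _)
  rw [hψ, h3 ψ]; exact Limits.comp_zero

lemma mzero_isZero {M : C} (hM : IsSilting M) (Q : C) (hQ : ∀ i : ℤ, Zr (M⟦i⟧) Q) :
    IsZero Q := by
  have key : ∀ X : C, inThick M X → ∀ i : ℤ, Zr (X⟦i⟧) Q := by
    intro X hX
    induction hX with
    | base => exact hQ
    | shift X n _ ih => exact fun i => (ih (n + i)).of_iso_left (shAdd X n i).symm
    | retractOf X Y _ hretr ih =>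
        obtain ⟨ι, r, hir⟩ := hretr
        intro i f
        have : f = ι⟦i⟧' ≫ (r⟦i⟧' ≫ f) := by
          rw [← Category.assoc, ← Functor.map_comp, hir, CategoryTheory.Functor.map_id, Category.id_comp]
        rw [this, ih i (r⟦i⟧' ≫ f), Limits.comp_zero]
    | ext2 T hT _ _ ih1 ih3 =>
        intro i
        have dt : DT T.obj₁ T.obj₂ T.obj₃ := ⟨T.mor₁, T.mor₂, T.mor₃, hT⟩
        exact (dt.shift i).rz_mid (ih3 i) (ih1 i)
  have h0 : Zr Q Q := (key Q (hM.generates Q) 0).of_iso_left ((shiftFunctorZero C ℤ).app Q)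
  rw [IsZero.iff_id_eq_zero]
  exact h0 _

lemma m_iso {M : C} (hM : IsSilting M) {P Q : C} (ψ : P ⟶ Q)
    (hinj : ∀ (i : ℤ) (f : M⟦i⟧ ⟶ P), f ≫ ψ = 0 → f = 0)
    (hsurj : ∀ (i : ℤ) (g : M⟦i⟧ ⟶ Q), ∃ f : M⟦i⟧ ⟶ P, f ≫ ψ = g) : IsIso ψ := by
  obtain ⟨R, q, w, hT⟩ := Pretriangulated.distinguished_cocone_triangle ψ
  have hw : w ≫ ψ⟦(1:ℤ)⟧' = 0 := by
    have h2 := comp_distTriang_mor_zero₂₃ _ (rot_of_distTriang _ hT)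
    dsimp [Triangle.rotate, Triangle.mk] at h2
    rw [Preadditive.comp_neg] at h2
    exact neg_eq_zero.mp h2
  have hinj' : ∀ (i : ℤ) (f : M⟦i⟧ ⟶ P⟦(1:ℤ)⟧), f ≫ ψ⟦(1:ℤ)⟧' = 0 → f = 0 := by
    intro i f hf
    have i1 := shiftFunctorCompIsoId C (1:ℤ) (-1:ℤ) (by ring)
    have hnat : f⟦(-1:ℤ)⟧' ≫ i1.hom.app P ≫ ψ =
        f⟦(-1:ℤ)⟧' ≫ ψ⟦(1:ℤ)⟧'⟦(-1:ℤ)⟧' ≫ i1.hom.app Q := by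
      have hn := i1.hom.naturality ψ
      simp only [Functor.comp_map, Functor.id_map] at hn
      rw [← hn]
    have hg : ((shAdd M i (-1)).inv ≫ f⟦(-1:ℤ)⟧' ≫ i1.hom.app P) ≫ ψ = 0 := by
      simp only [Category.assoc]
      rw [hnat, ← Functor.map_comp_assoc, hf, Functor.map_zero, Limits.zero_comp,
        Limits.comp_zero]
    have h6 := hinj _ _ hg
    have h5 : f⟦(-1:ℤ)⟧' ≫ i1.hom.app P = 0 := by
      have h7 : f⟦(-1:ℤ)⟧' ≫ i1.hom.app P =
          (shAdd M i (-1)).hom ≫ ((shAdd M i (-1)).inv ≫ f⟦(-1:ℤ)⟧' ≫ i1.hom.app P) := by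
        simp
      rw [h7, h6, Limits.comp_zero]
    have hzero : f⟦(-1:ℤ)⟧' = 0 := by
      have h8 : f⟦(-1:ℤ)⟧' = (f⟦(-1:ℤ)⟧' ≫ i1.hom.app P) ≫ (i1.inv.app P) := by
        simp
      rw [h8, h5, Limits.zero_comp]
    apply (shiftFunctor C (-1:ℤ)).map_injective
    rw [hzero, Functor.map_zero]
  have hR : ∀ i : ℤ, Zr (M⟦i⟧) R := by
    intro i φ
    have h1 : φ ≫ w = 0 := hinj' i (φ ≫ w) (by rw [Category.assoc, hw, Limits.comp_zero])
    obtain ⟨γ, hγ⟩ := Triangle.coyoneda_exact₃ _ hT φ h1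
    obtain ⟨β, hβ⟩ := hsurj i γ
    have hpq : ψ ≫ q = 0 := comp_distTriang_mor_zero₁₂ _ hT
    rw [hγ, ← hβ]
    simp only [Triangle.mk, Category.assoc, hpq, Limits.comp_zero]
  exact (Triangle.isZero₃_iff_isIso₁ _ hT).1 (mzero_isZero hM R hR)

/-- `X⟦a⟧⟦b⟧ ≅ X⟦c⟧` when `a + b = c`. -/
noncomputable def shTo (X : C) {a b c : ℤ} (h : a + b = c) : X⟦a⟧⟦b⟧ ≅ X⟦c⟧ :=
  shAdd X a b ≪≫ eqToIso (by rw [h])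

lemma zrM_shift_iff {M X : C} {i s j : ℤ} (hj : i = j + s) :
    Zr (M⟦i⟧) (X⟦s⟧) ↔ Zr (M⟦j⟧) X := by
  rw [zr_shift_right]
  have h' : i + (-s) = j := by omega
  constructor
  · intro h; exact h.of_iso_left (shTo M h')
  · intro h; exact h.of_iso_left (shTo M h').symm

lemma heart_zr {M H : C} (hH : inHeart M H) {i : ℤ} (hi : i ≠ 0) : Zr (M⟦i⟧) H := by
  rcases lt_or_gt_of_ne hi with h | h
  · exact fun f => hH.1 i h f
  · exact fun f => hH.2 i h f

section WithM

variable {M : C}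

/-- Orthogonality: `Hom(T^{≤0}, T^{≥1}) = 0`. -/
lemma orth (hM : IsSilting M) (hAdj : HasRightAdjacentTStructure M) {X Y : C}
    (hX : TleZ M X) (hY : ∀ i : ℤ, 0 ≤ i → Zr (M⟦i⟧) Y) : Zr X Y := by
  intro f
  obtain ⟨Cf, g, w, hT⟩ := Pretriangulated.distinguished_cocone_triangle f
  obtain ⟨A, B, a, b, c, hTr, hA, hB⟩ := hAdj Cf
  have hBz : ∀ i : ℤ, 0 ≤ i → Zr (M⟦i⟧) B := fun i hi φ => hB i hi φ
  have hAz : ∀ i : ℤ, i < 0 → Zr (M⟦i⟧) A := fun i hi φ => hA i hi φ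
  have hXz : ∀ i : ℤ, i < 0 → Zr (M⟦i⟧) X := fun i hi φ => hX i hi φ
  have hiso : IsIso (g ≫ b) := by
    apply m_iso hM
    · intro i f' hf'
      rcases le_or_gt 0 i with hi | hi
      · exact hY i hi f'
      · have h1 : (f' ≫ g) ≫ b = 0 := by rw [Category.assoc]; exact hf'
        obtain ⟨α, hα⟩ := Triangle.coyoneda_exact₂ _ hTr (f' ≫ g) h1
        rw [hAz i hi α] at hα; simp only [Triangle.mk, Limits.zero_comp] at hα
        obtain ⟨β, hβ⟩ := Triangle.coyoneda_exact₂ _ hT f' hα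
        rw [hβ, hXz i hi β]; exact Limits.zero_comp
    · intro i g'
      rcases le_or_gt 0 i with hi | hi
      · exact ⟨0, by rw [Limits.zero_comp, hBz i hi g']⟩
      · have h2 : g' ≫ c = 0 := by
          have : Zr (M⟦i⟧) (A⟦(1:ℤ)⟧) := (zrM_shift_iff (by ring)).2 (hAz (i - 1) (by omega))
          exact this _
        obtain ⟨γ, hγ⟩ := Triangle.coyoneda_exact₃ _ hTr g' h2
        have h3 : γ ≫ w = 0 := by
          have : Zr (M⟦i⟧) (X⟦(1:ℤ)⟧) := (zrM_shift_iff (by ring)).2 (hXz (i - 1) (by omega))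
          exact this _
        obtain ⟨η, hη⟩ := Triangle.coyoneda_exact₃ _ hT γ h3
        refine ⟨η, ?_⟩
        rw [hγ, hη]
        show η ≫ g ≫ b = (η ≫ g) ≫ b
        exact (Category.assoc _ _ _).symm
  have hfg : f ≫ g = 0 := comp_distTriang_mor_zero₁₂ _ hT
  calc f = f ≫ (g ≫ b) ≫ CategoryTheory.inv (g ≫ b) := by simp
  _ = (f ≫ g) ≫ b ≫ CategoryTheory.inv (g ≫ b) := by simp only [Category.assoc]
  _ = 0 := by rw [hfg, Limits.zero_comp]

/-- The truncation ("tower") triangle `W → V → H⁰(V) → W[1]` for `V ∈ T^{≤0}`. -/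
lemma tower (hM : IsSilting M) (hAdj : HasRightAdjacentTStructure M) {V : C}
    (hV : TleZ M V) :
    ∃ (W H₀ : C) (wm : W ⟶ V) (t : V ⟶ H₀) (u : H₀ ⟶ W⟦(1:ℤ)⟧),
      Triangle.mk wm t u ∈ distinguishedTriangles ∧
      (∀ i : ℤ, i ≤ 0 → Zr (M⟦i⟧) W) ∧ inHeart M H₀ ∧
      (∀ i : ℤ, 1 ≤ i → Zr (M⟦i⟧) V → Zr (M⟦i⟧) W) := by
  obtain ⟨A, B, a, b, c, hTr, hA, hB⟩ := hAdj (V⟦(-1:ℤ)⟧)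
  have dt0 : DT A (V⟦(-1:ℤ)⟧) B := ⟨a, b, c, hTr⟩
  have dt1 : DT (A⟦(1:ℤ)⟧) V (B⟦(1:ℤ)⟧) :=
    ((dt0.shift 1).of_iso₂ ((shiftFunctorCompIsoId C (-1:ℤ) (1:ℤ) (by ring)).app V))
  obtain ⟨wm, t, u, hT1⟩ := dt1
  have hW : ∀ i : ℤ, i ≤ 0 → Zr (M⟦i⟧) (A⟦(1:ℤ)⟧) := by
    intro i hi
    exact (zrM_shift_iff (show i = (i-1) + 1 by ring)).2 (fun φ => hA (i-1) (by omega) φ)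
  have hH₀ : inHeart M (B⟦(1:ℤ)⟧) := by
    constructor
    · intro i hi φ
      have h3 : Zr (M⟦i⟧) ((A⟦(1:ℤ)⟧)⟦(1:ℤ)⟧) :=
        (zrM_shift_iff (show i = (i-1) + 1 by ring)).2 (hW (i-1) (by omega))
      exact (show DT (A⟦(1:ℤ)⟧) V (B⟦(1:ℤ)⟧) from ⟨wm, t, u, hT1⟩).zr_third
        (fun ψ => hV i hi ψ) h3 φ
    · intro i hi φ
      exact ((zrM_shift_iff (show i = (i-1) + 1 by ring)).2
        (fun ψ => hB (i-1) (by omega) ψ)) φ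
  refine ⟨A⟦(1:ℤ)⟧, B⟦(1:ℤ)⟧, wm, t, u, hT1, hW, hH₀, ?_⟩
  intro i hi hZ φ
  have h1 : φ ≫ wm = 0 := hZ _
  obtain ⟨α, hα⟩ := Triangle.coyoneda_exact₂ _ (inv_rot_of_distTriang _ hT1) φ h1
  have hBz : Zr (M⟦i⟧) ((B⟦(1:ℤ)⟧)⟦(-1:ℤ)⟧) :=
    (zrM_shift_iff (show i = (i+1) + (-1) by ring)).2 (heart_zr hH₀ (by omega))
  rw [hα, hBz α]; exact Limits.zero_comp

end WithM

section WithM2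

variable {M : C}

/-- `Hom(T^{≤-1}, heart) = 0`. -/
lemma claimN (hM : IsSilting M) (hAdj : HasRightAdjacentTStructure M) {U H : C}
    (hU : ∀ i : ℤ, i ≤ 0 → Zr (M⟦i⟧) U) (hH : inHeart M H) : Zr U H := by
  intro f
  obtain ⟨Cf, g, w, hT⟩ := Pretriangulated.distinguished_cocone_triangle f
  have dt0 : DT U H Cf := ⟨f, g, w, hT⟩
  have hCle : TleZ M Cf := by
    intro i hi
    exact dt0.zr_third (heart_zr hH (by omega))
      ((zrM_shift_iff (show i = (i-1)+1 by ring)).2 (hU (i-1) (by omega)))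
  obtain ⟨W, H₀, wm, t, u, hT1, hWle, hH₀, _⟩ := tower hM hAdj hCle
  have hiso : IsIso (g ≫ t) := by
    apply m_iso hM
    · intro i f' hf'
      rcases eq_or_ne i 0 with rfl | hne
      · have h1 : (f' ≫ g) ≫ t = 0 := by rw [Category.assoc]; exact hf'
        obtain ⟨α, hα⟩ := Triangle.coyoneda_exact₂ _ hT1 (f' ≫ g) h1
        rw [hWle 0 le_rfl α] at hα; simp only [Triangle.mk, Limits.zero_comp] at hα
        obtain ⟨β, hβ⟩ := Triangle.coyoneda_exact₂ _ hT f' hα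
        rw [hβ, hU 0 le_rfl β]; exact Limits.zero_comp
      · exact heart_zr hH hne f'
    · intro i g'
      rcases eq_or_ne i 0 with rfl | hne
      · have h2 : g' ≫ u = 0 := by
          have h4 : Zr (M⟦(0:ℤ)⟧) (W⟦(1:ℤ)⟧) :=
            (zrM_shift_iff (show (0:ℤ) = (-1)+1 by ring)).2 (hWle (-1) (by omega))
          exact h4 _
        obtain ⟨γ, hγ⟩ := Triangle.coyoneda_exact₃ _ hT1 g' h2
        have h3 : γ ≫ w = 0 := by
          have h4 : Zr (M⟦(0:ℤ)⟧) (U⟦(1:ℤ)⟧) :=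
            (zrM_shift_iff (show (0:ℤ) = (-1)+1 by ring)).2 (hU (-1) (by omega))
          exact h4 _
        obtain ⟨η, hη⟩ := Triangle.coyoneda_exact₃ _ hT γ h3
        refine ⟨η, ?_⟩
        rw [hγ, hη]
        show η ≫ g ≫ t = (η ≫ g) ≫ t
        exact (Category.assoc _ _ _).symm
      · exact ⟨0, by rw [Limits.zero_comp, heart_zr hH₀ hne g']⟩
  have hfg : f ≫ g = 0 := comp_distTriang_mor_zero₁₂ _ hT
  calc f = f ≫ (g ≫ t) ≫ CategoryTheory.inv (g ≫ t) := by simp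
  _ = (f ≫ g) ≫ t ≫ CategoryTheory.inv (g ≫ t) := by simp only [Category.assoc]
  _ = 0 := by rw [hfg, Limits.zero_comp]

lemma zr_M_of_shift0 {X : C} (h : Zr (M⟦(0:ℤ)⟧) X) : Zr M X :=
  h.of_iso_left ((shiftFunctorZero C ℤ).app M)

lemma zr_M_to_shift0 {X : C} (h : Zr M X) : Zr (M⟦(0:ℤ)⟧) X :=
  h.of_iso_left ((shiftFunctorZero C ℤ).app M).symm

lemma zr_biproduct_left {n : ℕ} {V : C} (h : Zr M V) : Zr (⨁ fun _ : Fin n => M) V := by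
  intro g
  have htot : 𝟙 (⨁ fun _ : Fin n => M) =
      ∑ t : Fin n, biproduct.π (fun _ : Fin n => M) t ≫ biproduct.ι (fun _ : Fin n => M) t :=
    biproduct.total.symm
  calc g = 𝟙 _ ≫ g := by rw [Category.id_comp]
  _ = ∑ t : Fin n, biproduct.π (fun _ : Fin n => M) t ≫
        (biproduct.ι (fun _ : Fin n => M) t ≫ g) := by
      rw [htot, Preadditive.sum_comp]
      simp only [Category.assoc]
  _ = 0 := by
      refine Finset.sum_eq_zero (fun t _ => ?_)
      rw [h (biproduct.ι (fun _ : Fin n => M) t ≫ g), Limits.comp_zero]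

lemma zr_biproduct_right {n : ℕ} {W : C} (h : Zr W M) : Zr W (⨁ fun _ : Fin n => M) := by
  intro g
  have htot : 𝟙 (⨁ fun _ : Fin n => M) =
      ∑ t : Fin n, biproduct.π (fun _ : Fin n => M) t ≫ biproduct.ι (fun _ : Fin n => M) t :=
    biproduct.total.symm
  calc g = g ≫ 𝟙 _ := by rw [Category.comp_id]
  _ = ∑ t : Fin n, (g ≫ biproduct.π (fun _ : Fin n => M) t) ≫
        biproduct.ι (fun _ : Fin n => M) t := by
      rw [htot, Preadditive.comp_sum]
      simp only [Category.assoc]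
  _ = 0 := by
      refine Finset.sum_eq_zero (fun t _ => ?_)
      rw [h (g ≫ biproduct.π (fun _ : Fin n => M) t), Limits.zero_comp]

lemma inAdd.zr_left {Z V : C} (h : inAdd M Z) (hz : Zr M V) : Zr Z V := by
  obtain ⟨n, ι, ρ, hir⟩ := h
  intro f
  have : f = ι ≫ (ρ ≫ f) := by rw [← Category.assoc, hir, Category.id_comp]
  rw [this, zr_biproduct_left hz (ρ ≫ f), Limits.comp_zero]

lemma inAdd.zr_right {Z W : C} (h : inAdd M Z) (hz : Zr W M) : Zr W Z := by
  obtain ⟨n, ι, ρ, hir⟩ := h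
  intro f
  have : f = (f ≫ ι) ≫ ρ := by rw [Category.assoc, hir, Category.comp_id]
  rw [this, zr_biproduct_right hz (f ≫ ι), Limits.zero_comp]

lemma inAdd.zr_left_shift {Z V : C} (h : inAdd M Z) {s : ℤ} (hz : Zr (M⟦s⟧) V) :
    Zr (Z⟦s⟧) V := by
  rw [zr_shift_left] at hz ⊢
  exact h.zr_left hz

lemma inAdd.zr_right_shift {Z W : C} (h : inAdd M Z) {s : ℤ} (hz : Zr W (M⟦s⟧)) :
    Zr W (Z⟦s⟧) := by
  rw [zr_shift_right] at hz ⊢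
  exact h.zr_right hz

lemma inAdd.retract {X Y : C} (h : inAdd M Y) (i : X ⟶ Y) (r : Y ⟶ X)
    (hir : i ≫ r = 𝟙 X) : inAdd M X := by
  obtain ⟨n, ι, ρ, h'⟩ := h
  refine ⟨n, i ≫ ι, ρ ≫ r, ?_⟩
  rw [Category.assoc, ← Category.assoc ι, h', Category.id_comp, hir]

/-- existence of right `add M`-approximations (covers). -/
lemma approx (hfin : HomFinite k C) (M X : C) :
    ∃ (M₀ : C) (p : M₀ ⟶ X), inAdd M M₀ ∧ ∀ f : M ⟶ X, ∃ t : M ⟶ M₀, t ≫ p = f := by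
  haveI := hfin M X
  set r := Module.finrank k (M ⟶ X) with hr
  let B := Module.finBasis k (M ⟶ X)
  refine ⟨⨁ fun _ : Fin r => M, biproduct.desc (fun t => B t), ⟨r, 𝟙 _, 𝟙 _, by simp⟩, ?_⟩
  intro f
  refine ⟨∑ t : Fin r, (B.repr f) t • biproduct.ι (fun _ : Fin r => M) t, ?_⟩
  rw [Preadditive.sum_comp]
  have : ∀ t : Fin r, ((B.repr f) t • biproduct.ι (fun _ : Fin r => M) t) ≫
      biproduct.desc (fun t => B t) = (B.repr f) t • B t := by
    intro t
    rw [CategoryTheory.Linear.smul_comp, biproduct.ι_desc]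
  rw [Finset.sum_congr rfl (fun t _ => this t)]
  exact B.sum_repr f

/-- upper boundedness of homs. -/
lemma ub (hM : IsSilting M) (X Y : C) : ∃ N : ℤ, ∀ n : ℤ, N ≤ n → Zr X (Y⟦n⟧) := by
  have step1 : ∀ Y : C, inThick M Y → ∃ N : ℤ, ∀ n : ℤ, N ≤ n → Zr M (Y⟦n⟧) := by
    intro Y hY
    induction hY with
    | base => exact ⟨1, fun n hn f => hM.presilting n (by omega) f⟩
    | shift Z m _ ih =>
        obtain ⟨N, hN⟩ := ih
        exact ⟨N - m, fun n hn => ((hN (m + n) (by omega)).of_iso_right (shAdd Z m n).symm)⟩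
    | retractOf X' Y' _ hr ih =>
        obtain ⟨ι, rr, hir⟩ := hr
        obtain ⟨N, hN⟩ := ih
        refine ⟨N, fun n hn f => ?_⟩
        have h1 : f = (f ≫ ι⟦n⟧') ≫ rr⟦n⟧' := by
          rw [Category.assoc, ← Functor.map_comp, hir, CategoryTheory.Functor.map_id,
            Category.comp_id]
        rw [h1, hN n hn (f ≫ ι⟦n⟧'), Limits.zero_comp]
    | ext2 T hT _ _ ih1 ih3 =>
        obtain ⟨N1, hN1⟩ := ih1
        obtain ⟨N3, hN3⟩ := ih3
        have dt : DT T.obj₁ T.obj₂ T.obj₃ := ⟨T.mor₁, T.mor₂, T.mor₃, hT⟩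
        exact ⟨max N1 N3, fun n hn =>
          (dt.shift n).zr_mid (hN1 n (by omega)) (hN3 n (by omega))⟩
  have step2 : ∀ X : C, inThick M X → ∃ N : ℤ, ∀ n : ℤ, N ≤ n → Zr X (Y⟦n⟧) := by
    intro X hX
    induction hX with
    | base => exact step1 Y (hM.generates Y)
    | shift Z m _ ih =>
        obtain ⟨N, hN⟩ := ih
        refine ⟨N + m, fun n hn => ?_⟩
        rw [zr_shift_left]
        exact (hN (n - m) (by omega)).of_iso_right
          ((shTo Y (show n + -m = n - m by ring)).symm)
    | retractOf X' Y' _ hr ih =>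
        obtain ⟨ι, rr, hir⟩ := hr
        obtain ⟨N, hN⟩ := ih
        refine ⟨N, fun n hn f => ?_⟩
        have h1 : f = ι ≫ (rr ≫ f) := by rw [← Category.assoc, hir, Category.id_comp]
        rw [h1, hN n hn (rr ≫ f), Limits.comp_zero]
    | ext2 T hT _ _ ih1 ih3 =>
        obtain ⟨N1, hN1⟩ := ih1
        obtain ⟨N3, hN3⟩ := ih3
        have dt : DT T.obj₁ T.obj₂ T.obj₃ := ⟨T.mor₁, T.mor₂, T.mor₃, hT⟩
        exact ⟨max N1 N3, fun n hn =>
          dt.rz_mid (hN3 n (by omega)) (hN1 n (by omega))⟩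
  exact step2 X (hM.generates X)

/-- lower boundedness of homs (needs the Serre functor). -/
lemma lb (hM : IsSilting M) (S : SerreFunctor k C) (X Y : C) :
    ∃ N : ℤ, ∀ n : ℤ, N ≤ n → Zr (X⟦n⟧) Y := by
  have base : ∃ N : ℤ, ∀ n : ℤ, N ≤ n → Zr (M⟦n⟧) M := by
    obtain ⟨N, hN⟩ := ub (M := M) hM (S.inv.obj M) M
    exact ⟨N, fun n hn => (zr_serre_inv S (M⟦n⟧) M).1 (hN n hn)⟩
  have step1 : ∀ X : C, inThick M X → ∃ N : ℤ, ∀ n : ℤ, N ≤ n → Zr (X⟦n⟧) M := by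
    intro X hX
    induction hX with
    | base => exact base
    | shift Z m _ ih =>
        obtain ⟨N, hN⟩ := ih
        exact ⟨N - m, fun n hn => (hN (m + n) (by omega)).of_iso_left (shAdd Z m n).symm⟩
    | retractOf X' Y' _ hr ih =>
        obtain ⟨ι, rr, hir⟩ := hr
        obtain ⟨N, hN⟩ := ih
        refine ⟨N, fun n hn f => ?_⟩
        have h1 : f = ι⟦n⟧' ≫ (rr⟦n⟧' ≫ f) := by
          rw [← Category.assoc, ← Functor.map_comp, hir, CategoryTheory.Functor.map_id,
            Category.id_comp]
        rw [h1, hN n hn (rr⟦n⟧' ≫ f), Limits.comp_zero]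
    | ext2 T hT _ _ ih1 ih3 =>
        obtain ⟨N1, hN1⟩ := ih1
        obtain ⟨N3, hN3⟩ := ih3
        have dt : DT T.obj₁ T.obj₂ T.obj₃ := ⟨T.mor₁, T.mor₂, T.mor₃, hT⟩
        exact ⟨max N1 N3, fun n hn =>
          (dt.shift n).rz_mid (hN3 n (by omega)) (hN1 n (by omega))⟩
  have step2 : ∀ Y : C, inThick M Y → ∃ N : ℤ, ∀ n : ℤ, N ≤ n → Zr (X⟦n⟧) Y := by
    intro Y hY
    induction hY with
    | base => exact step1 X (hM.generates X)
    | shift Z m _ ih =>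
        obtain ⟨N, hN⟩ := ih
        refine ⟨N + m, fun n hn => ?_⟩
        rw [zr_shift_right]
        exact (hN (n - m) (by omega)).of_iso_left
          ((shTo X (show n + -m = n - m by ring)).symm)
    | retractOf X' Y' _ hr ih =>
        obtain ⟨ι, rr, hir⟩ := hr
        obtain ⟨N, hN⟩ := ih
        refine ⟨N, fun n hn f => ?_⟩
        have h1 : f = (f ≫ ι) ≫ rr := by rw [Category.assoc, hir, Category.comp_id]
        rw [h1, hN n hn (f ≫ ι), Limits.zero_comp]
    | ext2 T hT _ _ ih1 ih3 =>
        obtain ⟨N1, hN1⟩ := ih1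
        obtain ⟨N3, hN3⟩ := ih3
        have dt : DT T.obj₁ T.obj₂ T.obj₃ := ⟨T.mor₁, T.mor₂, T.mor₃, hT⟩
        exact ⟨max N1 N3, fun n hn =>
          dt.zr_mid (hN1 n (by omega)) (hN3 n (by omega))⟩
  exact step2 Y (hM.generates Y)

end WithM2

section WithM3

variable {M : C}

lemma silt_zr (hM : IsSilting M) {i j : ℤ} (h : i < j) : Zr (M⟦i⟧) (M⟦j⟧) := by
  have h0 : Zr M (M⟦j - i⟧) := fun f => hM.presilting _ (by omega) f
  have h1 : Zr (M⟦i⟧) ((M⟦j - i⟧)⟦i⟧) :=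
    (zrM_shift_iff (show i = 0 + i by ring)).2 (zr_M_to_shift0 h0)
  exact h1.of_iso_right (shTo M (show (j - i) + i = j by ring))

/-- The `add M`-cover triangle `M₀ → X → Cc → M₀[1]` with `Cc ∈ M[≤0]^⊥`. -/
lemma cover (hfin : HomFinite k C) (hM : IsSilting M) {X : C} (hX : TleZ M X) :
    ∃ (M₀ Cc : C) (p : M₀ ⟶ X) (δ : X ⟶ Cc) (w : Cc ⟶ M₀⟦(1:ℤ)⟧),
      Triangle.mk p δ w ∈ distinguishedTriangles ∧ inAdd M M₀ ∧
      (∀ i : ℤ, i ≤ 0 → Zr (M⟦i⟧) Cc) := by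
  obtain ⟨M₀, p, hAdd, hsurj⟩ := approx hfin M X
  obtain ⟨Cc, δ, w, hT⟩ := Pretriangulated.distinguished_cocone_triangle p
  refine ⟨M₀, Cc, p, δ, w, hT, hAdd, ?_⟩
  intro i hi φ
  have h1 : φ ≫ w = 0 := by
    have h2 : Zr (M⟦i⟧) (M₀⟦(1:ℤ)⟧) := hAdd.zr_right_shift (silt_zr hM (by omega))
    exact h2 _
  obtain ⟨γ, hγ⟩ := Triangle.coyoneda_exact₃ _ hT φ h1
  rcases lt_or_eq_of_le hi with hlt | heq
  · rw [hγ, hX i hlt γ]; exact Limits.zero_comp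
  · subst heq
    set e : M⟦(0:ℤ)⟧ ≅ M := (shiftFunctorZero C ℤ).app M
    obtain ⟨t, ht⟩ := hsurj (e.inv ≫ γ)
    have hγ' : γ = e.hom ≫ t ≫ p := by
      rw [ht]
      simp
    have hpd : p ≫ δ = 0 := comp_distTriang_mor_zero₁₂ _ hT
    rw [hγ, hγ']
    simp only [Triangle.mk, Category.assoc, hpd, Limits.comp_zero]

/-- `Hom(X, Z) = 0` for `Z` concentrated in heart-degrees `[1,b]`,
provided `Hom(X, heart⟦i⟧) = 0` for `1 ≤ i ≤ b`. -/
lemma lemG (hM : IsSilting M) (hAdj : HasRightAdjacentTStructure M) :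
    ∀ b : ℕ, ∀ Z X : C,
    (∀ i : ℤ, i ≤ 0 → Zr (M⟦i⟧) Z) → (∀ i : ℤ, (b:ℤ) < i → Zr (M⟦i⟧) Z) →
    (∀ H : C, inHeart M H → ∀ i : ℤ, 1 ≤ i → i ≤ (b:ℤ) → Zr X (H⟦i⟧)) → Zr X Z := by
  intro b
  induction b with
  | zero =>
      intro Z X hle hwin _
      have hz : IsZero Z := mzero_isZero hM Z (fun i => by
        rcases le_or_gt i 0 with h | h
        · exact hle i h
        · exact hwin i (by omega))
      exact fun f => hz.eq_zero_of_tgt f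
  | succ b ih =>
      intro Z X hle hwin hyp
      have hV : TleZ M (Z⟦(-1:ℤ)⟧) := by
        intro i hi
        exact (zrM_shift_iff (show i = (i+1) + (-1) by ring)).2 (hle (i+1) (by omega))
      obtain ⟨W, H₀, wm, t, u, hT1, hWle, hH₀, hWwin⟩ := tower hM hAdj hV
      have dtz : DT (W⟦(1:ℤ)⟧) Z (H₀⟦(1:ℤ)⟧) :=
        ((show DT W (Z⟦(-1:ℤ)⟧) H₀ from ⟨wm, t, u, hT1⟩).shift 1).of_iso₂
          ((shiftFunctorCompIsoId C (-1:ℤ) (1:ℤ) (by ring)).app Z)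
      refine dtz.zr_mid ?_ ?_
      · rw [zr_shift_right]
        refine ih W (X⟦(-1:ℤ)⟧) hWle ?_ ?_
        · intro i hi
          refine hWwin i (by omega) ?_
          exact (zrM_shift_iff (show i = (i+1) + (-1) by ring)).2 (hwin (i+1) (by omega))
        · intro H hH i h1 h2
          rw [zr_shift_left]
          exact (hyp H hH (i+1) (by omega) (by omega)).of_iso_right
            (shTo H (show i + 1 = i + 1 by ring)).symm |>.of_iso_right (Iso.refl _)
      · exact hyp H₀ hH₀ 1 le_rfl (by omega)

/-- objects of `add M ∗ ⋯ ∗ add M⟦e⟧` have no homs to `M⟦>e⟧`. -/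
lemma qlem (hM : IsSilting M) : ∀ e : ℕ, ∀ X : C, inStarAdd M e X →
    ∀ l : ℤ, (e:ℤ) < l → Zr X (M⟦l⟧) := by
  intro e
  induction e with
  | zero =>
      intro X hX l hl
      exact hX.zr_left (fun f => hM.presilting l (by omega) f)
  | succ e ih =>
      intro X hX l hl
      obtain ⟨A, B, f, g, h, hT, hA, hB⟩ := hX
      have dt : DT A X (B⟦(1:ℤ)⟧) := ⟨f, g, h, hT⟩
      refine dt.rz_mid ?_ ?_
      · rw [zr_shift_left]
        exact (ih B hB (l-1) (by omega)).of_iso_right (shTo M (show l + -1 = l - 1 by ring)).symm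
      · exact hA.zr_left (fun φ => hM.presilting l (by omega) φ)

end WithM3

section WithM4

variable {M : C}

/-- (3) ⟹ W : `Hom(T^{≥1}, M⟦≥d⟧) = 0`. -/
lemma wlem (hM : IsSilting M) (hAdj : HasRightAdjacentTStructure M) (S : SerreFunctor k C)
    (d : ℕ) (h3 : ∀ H : C, inHeart M H → inStarAdd M d H) :
    ∀ Y : C, (∀ i : ℤ, 0 ≤ i → Zr (M⟦i⟧) Y) → ∀ j : ℤ, (d:ℤ) ≤ j → Zr Y (M⟦j⟧) := by
  have key : ∀ c : ℕ, ∀ Y : C, (∀ i : ℤ, 0 ≤ i → Zr (M⟦i⟧) Y) →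
      (∀ i : ℤ, i < -(c:ℤ) → Zr (M⟦i⟧) Y) → ∀ j : ℤ, (d:ℤ) ≤ j → Zr Y (M⟦j⟧) := by
    intro c
    induction c with
    | zero =>
        intro Y hY hlow j _
        have hz : IsZero Y := mzero_isZero hM Y (fun i => by
          rcases le_or_gt 0 i with h | h
          · exact hY i h
          · exact hlow i (by omega))
        exact fun f => hz.eq_zero_of_src f
    | succ c ih =>
        intro Y hY hlow j hj
        set cc : ℤ := (c : ℤ) + 1 with hcc
        have hV : TleZ M (Y⟦cc⟧) := by
          intro i hi
          exact (zrM_shift_iff (show i = (i - cc) + cc by ring)).2 (hlow (i - cc) (by omega))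
        obtain ⟨W, H₀, wm, t, u, hT1, hWle, hH₀, hWwin⟩ := tower hM hAdj hV
        have eY : (Y⟦cc⟧)⟦-cc⟧ ≅ Y :=
          shTo Y (show cc + -cc = 0 by ring) ≪≫ (shiftFunctorZero C ℤ).app Y
        have dt2 : DT (W⟦-cc⟧) Y (H₀⟦-cc⟧) :=
          ((show DT W (Y⟦cc⟧) H₀ from ⟨wm, t, u, hT1⟩).shift (-cc)).of_iso₂ eY
        refine dt2.rz_mid ?_ ?_
        · rw [zr_shift_left]
          exact (qlem hM d H₀ (h3 H₀ hH₀) (j + cc) (by omega)).of_iso_right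
            (shTo M (show j + - -cc = j + cc by ring)).symm
        · refine ih (W⟦-cc⟧) ?_ ?_ j hj
          · intro i hi
            refine (zrM_shift_iff (show i = (i + cc) + -cc by ring)).2 ?_
            refine hWwin (i + cc) (by omega) ?_
            exact (zrM_shift_iff (show i + cc = i + cc by ring)).2 (hY i hi)
          · intro i hi
            refine (zrM_shift_iff (show i = (i + cc) + -cc by ring)).2 ?_
            exact hWle (i + cc) (by omega)
  intro Y hY j hj
  obtain ⟨N, hN⟩ := ub (M := M) hM M Y
  refine key N.toNat Y hY ?_ j hj
  intro i hi
  have h2 : Zr M (Y⟦-i⟧) := hN (-i) (by have := Int.self_le_toNat N; omega)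
  exact (zrM_shift_iff (show (0:ℤ) = i + -i by ring)).1 (zr_M_to_shift0 h2)

end WithM4

section WithM5

variable {M : C}

/-- (2) ⟹ (3), in the generalized form of an induction over `e`. -/
lemma lemA (hfin : HomFinite k C) (hM : IsSilting M) (hAdj : HasRightAdjacentTStructure M)
    (S : SerreFunctor k C) :
    ∀ e : ℕ, ∀ X : C, TleZ M X →
      (∀ H : C, inHeart M H → ∀ i : ℤ, (e:ℤ) < i → Zr X (H⟦i⟧)) → inStarAdd M e X := by
  intro e
  induction e with
  | zero =>
      intro X hX hyp
      obtain ⟨M₀, Cc, p, δ, w, hT, hAdd, hCc⟩ := cover hfin hM hX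
      obtain ⟨N, hN⟩ := lb hM S M Cc
      have hbw : ∀ i : ℤ, ((N.toNat : ℕ) : ℤ) < i → Zr (M⟦i⟧) Cc := by
        intro i hi
        exact hN i (by have := Int.self_le_toNat N; omega)
      have hXC : Zr X Cc :=
        lemG hM hAdj N.toNat Cc X hCc hbw (fun H hH i h1 _ => hyp H hH i (by omega))
      obtain ⟨s, hs⟩ := Triangle.coyoneda_exact₂ _ hT (𝟙 X)
        (by exact (Category.id_comp _).trans (hXC δ))
      exact hAdd.retract s p hs.symm
  | succ e ih =>
      intro X hX hyp
      obtain ⟨M₀, Cc, p, δ, w, hT, hAdd, hCc⟩ := cover hfin hM hX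
      have hB : inStarAdd M e (Cc⟦(-1:ℤ)⟧) := by
        apply ih
        · intro i hi
          exact (zrM_shift_iff (show i = (i+1) + (-1) by ring)).2 (hCc (i+1) (by omega))
        · intro H hH i hi
          rw [zr_shift_left]
          have hgoal : Zr Cc (H⟦i + 1⟧) := by
            have dtr : DT X Cc (M₀⟦(1:ℤ)⟧) := (show DT M₀ X Cc from ⟨p, δ, w, hT⟩).rot
            refine dtr.rz_mid ?_ ?_
            · refine hAdd.zr_left_shift ?_
              exact (zrM_shift_iff (show (1:ℤ) = -i + (i+1) by ring)).2
                (heart_zr hH (by omega))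
            · exact hyp H hH (i+1) (by omega)
          exact hgoal.of_iso_right (shTo H (show i + - (-1:ℤ) = i + 1 by ring)).symm
      have e1 : (Cc⟦(-1:ℤ)⟧)⟦(1:ℤ)⟧ ≅ Cc :=
        (shiftFunctorCompIsoId C (-1:ℤ) (1:ℤ) (by ring)).app Cc
      refine ⟨M₀, Cc⟦(-1:ℤ)⟧, p, δ ≫ e1.inv, e1.hom ≫ w, ?_, hAdd, hB⟩
      refine isomorphic_distinguished _ hT _ ?_
      exact Triangle.isoMk _ _ (Iso.refl _) (Iso.refl _) e1 (by simp [Triangle.mk]) (by simp [Triangle.mk]) (by simp [Triangle.mk])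

end WithM5

section Final

variable {M : C}

lemma zrMshift_move {M : C} (A : C) {i s : ℤ} : Zr (M⟦i⟧) (A⟦s⟧) ↔ Zr M (A⟦s - i⟧) := by
  rw [zrM_shift_iff (show i = (i - s) + s by ring), zr_shift_left,
    show -(i - s) = s - i by ring]

lemma tlez_M (hM : IsSilting M) : TleZ M M := by
  intro i hi f
  exact ((silt_zr hM (show i < 0 by omega)).of_iso_right ((shiftFunctorZero C ℤ).app M)) f

/-- `P ↔ ν_d⁻¹ M ∈ T^{≤0}`. -/
lemma P_iff (S : SerreFunctor k C) (d : ℕ) :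
    (∀ n : ℤ, (d:ℤ) < n → Zr M ((S.inv.obj M)⟦n⟧)) ↔
      TleZ M ((S.inv.obj M)⟦(d:ℤ)⟧) := by
  constructor
  · intro hP i hi
    have := hP ((d:ℤ) - i) (by omega)
    exact fun f => ((zrMshift_move (M := M) (S.inv.obj M)).2 this) f
  · intro hle n hn
    have h1 : Zr (M⟦(d:ℤ) - n⟧) ((S.inv.obj M)⟦(d:ℤ)⟧) := fun f => hle _ (by omega) f
    have h2 := (zrMshift_move (M := M) (S.inv.obj M)).1 h1
    rw [show (d:ℤ) - ((d:ℤ) - n) = n by ring] at h2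
    exact h2

/-- key consequence of (1): `Hom(heart, M⟦>d⟧) = 0`. -/
lemma vnu (hM : IsSilting M) (hAdj : HasRightAdjacentTStructure M) (S : SerreFunctor k C)
    (d : ℕ) (hP : ∀ n : ℤ, (d:ℤ) < n → Zr M ((S.inv.obj M)⟦n⟧))
    {H : C} (hH : inHeart M H) {l : ℤ} (hl : (d:ℤ) < l) : Zr H (M⟦l⟧) := by
  have hU : ∀ i : ℤ, i ≤ 0 → Zr (M⟦i⟧) ((S.inv.obj M)⟦l⟧) := by
    intro i hi
    exact (zrMshift_move (M := M) (S.inv.obj M)).2 (hP (l - i) (by omega))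
  have h1 : Zr ((S.inv.obj M)⟦l⟧) H := claimN hM hAdj hU hH
  rw [zr_shift_left] at h1
  rw [zr_serre_inv S (H⟦-l⟧) M] at h1
  rw [zr_shift_left] at h1
  rw [show - -l = l by ring] at h1
  exact h1

/-- (1) ⟹ (2). -/
lemma P_to_two (hM : IsSilting M) (hAdj : HasRightAdjacentTStructure M) (S : SerreFunctor k C)
    (d : ℕ) (hP : ∀ n : ℤ, (d:ℤ) < n → Zr M ((S.inv.obj M)⟦n⟧))
    {H H' : C} (hH : inHeart M H) (hH' : inHeart M H')
    {n : ℤ} (hn : (d:ℤ) < n) : Zr H (H'⟦n⟧) := by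
  rw [zr_serre S H (H'⟦n⟧), zr_shift_left]
  refine orth hM hAdj hH'.1 ?_
  intro i hi
  refine (zrM_shift_iff (show i = (i + n) + -n by ring)).2 ?_
  rw [← zr_serre S H (M⟦i + n⟧)]
  exact vnu hM hAdj S d hP hH (by omega)

/-- (1) ⟹ (3). -/
lemma P_to_three (hfin : HomFinite k C) (hM : IsSilting M)
    (hAdj : HasRightAdjacentTStructure M) (S : SerreFunctor k C)
    (d : ℕ) (hP : ∀ n : ℤ, (d:ℤ) < n → Zr M ((S.inv.obj M)⟦n⟧))
    {H : C} (hH : inHeart M H) : inStarAdd M d H := by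
  refine lemA hfin hM hAdj S d H hH.1 ?_
  intro H' hH' i hi
  exact P_to_two hM hAdj S d hP hH hH' hi

/-- a generic way to verify `T^{≤0}`-membership. -/
lemma le0_of_perp (hM : IsSilting M) (hAdj : HasRightAdjacentTStructure M) {V : C}
    (hperp : ∀ B : C, (∀ i : ℤ, 0 ≤ i → Zr (M⟦i⟧) B) → Zr V B) : TleZ M V := by
  obtain ⟨A, B, a, b, c, hTr, hA, hB⟩ := hAdj V
  have hBz : ∀ i : ℤ, 0 ≤ i → Zr (M⟦i⟧) B := fun i hi φ => hB i hi φ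
  have hVB : Zr V B := hperp B hBz
  have hA1 : TleZ M (A⟦(1:ℤ)⟧) := by
    intro i hi
    exact (zrM_shift_iff (show i = (i-1) + 1 by ring)).2 (fun φ => hA (i-1) (by omega) φ)
  have hid : 𝟙 B = 0 := by
    obtain ⟨ψ, hψ⟩ := Triangle.yoneda_exact₃ _ hTr (𝟙 B) (by
      show b ≫ 𝟙 B = 0
      rw [Category.comp_id]
      exact hVB b)
    rw [hψ, orth hM hAdj hA1 hBz ψ]; exact Limits.comp_zero
  have hzB : IsZero B := by rw [IsZero.iff_id_eq_zero]; exact hid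
  intro i hi φ
  have h1 : φ ≫ b = 0 := hzB.eq_zero_of_tgt _
  obtain ⟨α, hα⟩ := Triangle.coyoneda_exact₂ _ hTr φ h1
  rw [hα, hA i hi α]; exact Limits.zero_comp

/-- (3) ⟹ (1). -/
lemma three_to_P (hM : IsSilting M) (hAdj : HasRightAdjacentTStructure M)
    (S : SerreFunctor k C) (d : ℕ) (h3 : ∀ H : C, inHeart M H → inStarAdd M d H) :
    ∀ n : ℤ, (d:ℤ) < n → Zr M ((S.inv.obj M)⟦n⟧) := by
  rw [P_iff]
  refine le0_of_perp hM hAdj ?_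
  intro B hB
  have hWB : Zr B (M⟦(d:ℤ)⟧) := wlem hM hAdj S d h3 B hB (d:ℤ) le_rfl
  rw [zr_shift_left, zr_serre_inv S (B⟦-(d:ℤ)⟧) M]
  rw [zr_shift_right (d:ℤ)] at hWB
  exact hWB

/-- (1) ⟹ (5). -/
lemma P_to_five (hfin : HomFinite k C) (hM : IsSilting M)
    (hAdj : HasRightAdjacentTStructure M) (S : SerreFunctor k C) (d : ℕ)
    (hP : ∀ n : ℤ, (d:ℤ) < n → Zr M ((S.inv.obj M)⟦n⟧))
    {X : C} (hX : TleZ M X) : TleZ M ((S.inv.obj X)⟦(d:ℤ)⟧) := by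
  have h3 : ∀ H : C, inHeart M H → inStarAdd M d H :=
    fun H hH => P_to_three hfin hM hAdj S d hP hH
  refine le0_of_perp hM hAdj ?_
  intro B hB
  rw [zr_shift_left, zr_nu_both S (S.inv.obj X) (B⟦-(d:ℤ)⟧)]
  have h1 : Zr X (S.F.obj (B⟦-(d:ℤ)⟧)) := by
    refine orth hM hAdj hX ?_
    intro i hi
    rw [← zr_serre S (B⟦-(d:ℤ)⟧) (M⟦i⟧), zr_shift_left, show - -(d:ℤ) = (d:ℤ) by ring]
    have h2 : Zr B (M⟦i + (d:ℤ)⟧) := wlem hM hAdj S d h3 B hB (i + d) (by omega)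
    exact h2.of_iso_right (shTo M (show i + (d:ℤ) = i + (d:ℤ) from rfl)).symm
  exact h1.of_iso_left (nuCounit S X).symm

end Final

section Final2

variable {M : C}

/-- (1) ⟹ (4). -/
lemma P_to_four (hfin : HomFinite k C) (hM : IsSilting M)
    (hAdj : HasRightAdjacentTStructure M) (S : SerreFunctor k C) (d : ℕ)
    (hP : ∀ n : ℤ, (d:ℤ) < n → Zr M ((S.inv.obj M)⟦n⟧))
    {X : C} (hX : TgeZ M X) : TgeZ M (S.nud (d:ℤ) X) := by
  have h3 : ∀ H : C, inHeart M H → inStarAdd M d H :=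
    fun H hH => P_to_three hfin hM hAdj S d hP hH
  intro n hn φ
  suffices h : Zr (M⟦n⟧) (S.F.obj (X⟦(-(d:ℤ))⟧)) from h φ
  rw [← zr_serre S (X⟦-(d:ℤ)⟧) (M⟦n⟧)]
  rw [zr_shift_left, show - -(d:ℤ) = (d:ℤ) by ring]
  have hY : ∀ i : ℤ, 0 ≤ i → Zr (M⟦i⟧) (X⟦(-1:ℤ)⟧) := by
    intro i hi
    exact (zrM_shift_iff (show i = (i+1) + (-1) by ring)).2 (fun ψ => hX (i+1) (by omega) ψ)
  have h2 : Zr (X⟦(-1:ℤ)⟧) (M⟦n + (d:ℤ) - 1⟧) := wlem hM hAdj S d h3 _ hY _ (by omega)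
  rw [zr_shift_left, show - (-1:ℤ) = 1 by ring] at h2
  exact (h2.of_iso_right (shTo M (show n + (d:ℤ) - 1 + 1 = n + (d:ℤ) by ring))).of_iso_right
    (shTo M (show n + (d:ℤ) = n + (d:ℤ) from rfl)).symm

/-- (4) ⟹ (1). -/
lemma four_to_P (hM : IsSilting M) (hAdj : HasRightAdjacentTStructure M)
    (S : SerreFunctor k C) (d : ℕ)
    (h4 : ∀ X : C, TgeZ M X → TgeZ M (S.nud (d:ℤ) X)) :
    ∀ n : ℤ, (d:ℤ) < n → Zr M ((S.inv.obj M)⟦n⟧) := by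
  rw [P_iff]
  refine le0_of_perp hM hAdj ?_
  intro B hB
  rw [zr_shift_left, zr_serre_inv S (B⟦-(d:ℤ)⟧) M]
  have hBge : TgeZ M (B⟦(1:ℤ)⟧) := by
    intro n hn ψ
    exact ((zrM_shift_iff (show n = (n-1) + 1 by ring)).2 (hB (n-1) (by omega))) ψ
  have h1 := h4 (B⟦(1:ℤ)⟧) hBge
  have h2 : Zr ((B⟦(1:ℤ)⟧)⟦-(d:ℤ)⟧) (M⟦(1:ℤ)⟧) := by
    rw [zr_serre S _ (M⟦(1:ℤ)⟧)]
    exact fun φ => h1 1 (by omega) φ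
  have h3 : Zr (B⟦1 - (d:ℤ)⟧) (M⟦(1:ℤ)⟧) :=
    h2.of_iso_left (shTo B (show (1:ℤ) + -(d:ℤ) = 1 - (d:ℤ) by ring))
  rw [zr_shift_right] at h3
  exact h3.of_iso_left (shTo B (show 1 - (d:ℤ) + -1 = -(d:ℤ) by ring))

/-- (5) ⟹ (1). -/
lemma five_to_P (hM : IsSilting M) (S : SerreFunctor k C) (d : ℕ)
    (h5 : ∀ X : C, TleZ M X → TleZ M (S.nudInv (d:ℤ) X)) :
    ∀ n : ℤ, (d:ℤ) < n → Zr M ((S.inv.obj M)⟦n⟧) := by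
  rw [P_iff]
  exact h5 M (tlez_M hM)

end Final2

end Aux

/-- characterizations of `d`-siltingness. -/
theorem statement3 {k : Type u} [Field k]
    {C : Type u} [Category.{v} C] [Preadditive C] [CategoryTheory.Linear k C]
    [HasZeroObject C] [HasShift C ℤ] [∀ n : ℤ, (CategoryTheory.shiftFunctor C n).Additive]
    [Pretriangulated C] [HasFiniteBiproducts C]
    (hfin : HomFinite k C) (hKS : KrullSchmidt (C := C))
    (S : SerreFunctor k C) (M : C) (hM : IsSilting M)
    (hAdj : HasRightAdjacentTStructure M) (d : ℕ) :
    ((∀ n : ℤ, (d : ℤ) < n → ∀ f : M ⟶ (S.inv.obj M)⟦n⟧, f = 0) ↔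
      (∀ H H' : C, inHeart M H → inHeart M H' →
        ∀ n : ℤ, (d : ℤ) < n → ∀ f : H ⟶ H'⟦n⟧, f = 0)) ∧
    ((∀ n : ℤ, (d : ℤ) < n → ∀ f : M ⟶ (S.inv.obj M)⟦n⟧, f = 0) ↔
      (∀ H : C, inHeart M H → inStarAdd M d H)) ∧
    ((∀ n : ℤ, (d : ℤ) < n → ∀ f : M ⟶ (S.inv.obj M)⟦n⟧, f = 0) ↔
      (∀ X : C, TgeZ M X → TgeZ M (S.nud (d : ℤ) X))) ∧
    ((∀ n : ℤ, (d : ℤ) < n → ∀ f : M ⟶ (S.inv.obj M)⟦n⟧, f = 0) ↔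
      (∀ X : C, TleZ M X → TleZ M (S.nudInv (d : ℤ) X))) := by
  refine ⟨⟨?_, ?_⟩, ⟨?_, ?_⟩, ⟨?_, ?_⟩, ⟨?_, ?_⟩⟩
  · intro hP H H' hH hH' n hn f
    exact P_to_two hM hAdj S d (fun n hn f => hP n hn f) hH hH' hn f
  · intro h2 n hn f
    have h3 : ∀ H : C, inHeart M H → inStarAdd M d H := fun H hH =>
      lemA hfin hM hAdj S d H hH.1 (fun H' hH' i hi g => h2 H H' hH hH' i hi g)
    exact three_to_P hM hAdj S d h3 n hn f
  · intro hP H hH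
    exact P_to_three hfin hM hAdj S d (fun n hn f => hP n hn f) hH
  · intro h3 n hn f
    exact three_to_P hM hAdj S d h3 n hn f
  · intro hP X hX
    exact P_to_four hfin hM hAdj S d (fun n hn f => hP n hn f) hX
  · intro h4 n hn f
    exact four_to_P hM hAdj S d h4 n hn f
  · intro hP X hX
    exact P_to_five hfin hM hAdj S d (fun n hn f => hP n hn f) hX
  · intro h5 n hn f
    exact five_to_P hM S d h5 n hn f
end

section
/- Let T be a Hom-finite Krull-Schmidt triangulated category with Serre functor ν, M a silting object with right adjacent t-structure and heart H_M. Let T ∈ T_M^{≥0} with minimal (add νM)-coresolution triangles T_i → νM^i → T_{i+1} → T_i[1] as constructed from minimal left approximations. Then for every simple object S of H_M and every i ≥ 0, T(S, T[i]) ≅ T(S, νM^i). -/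
open CategoryTheory Limits Pretriangulated

universe v u

set_option linter.unusedSectionVars false

section Helpers

variable {k : Type u} [Field k]
variable {C : Type u} [Category.{v} C] [Preadditive C] [CategoryTheory.Linear k C]
  [HasZeroObject C] [HasShift C ℤ] [∀ n : ℤ, (CategoryTheory.shiftFunctor C n).Additive]
  [Pretriangulated C] [HasFiniteBiproducts C]

lemma zconj {A A' B B' : C} (eA : A' ≅ A) (eB : B ≅ B')
    (h : ∀ f : A' ⟶ B', f = 0) : ∀ f : A ⟶ B, f = 0 := by
  intro f
  have hf : f = eA.inv ≫ (eA.hom ≫ f ≫ eB.hom) ≫ eB.inv := by simp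
  rw [hf, h (eA.hom ≫ f ≫ eB.hom), zero_comp, comp_zero]

lemma zshift (n : ℤ) {A B : C} (h : ∀ f : A ⟶ B, f = 0) :
    ∀ f : A⟦n⟧ ⟶ B⟦n⟧, f = 0 := by
  intro f
  obtain ⟨g, rfl⟩ := (shiftFunctor C n).map_surjective f
  rw [h g, Functor.map_zero]

lemma zunshift (n : ℤ) {A B : C} (h : ∀ f : A⟦n⟧ ⟶ B⟦n⟧, f = 0) :
    ∀ f : A ⟶ B, f = 0 := by
  intro f
  apply (shiftFunctor C n).map_injective
  rw [h (f⟦n⟧'), Functor.map_zero]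

lemma hv_shift {M X : C} (b m : ℤ) (h : ∀ f : M⟦m - b⟧ ⟶ X, f = 0) :
    ∀ f : M⟦m⟧ ⟶ X⟦b⟧, f = 0 :=
  zconj (((shiftFunctorAdd' C (m - b) b m (by ring)).app M).symm) (Iso.refl _) (zshift b h)

lemma hv_zero {M X : C} (h : ∀ f : M⟦(0:ℤ)⟧ ⟶ X, f = 0) : ∀ f : M ⟶ X, f = 0 :=
  zconj ((shiftFunctorZero C ℤ).app M) (Iso.refl _) h

lemma hv_zero' {M X : C} (h : ∀ f : M ⟶ X, f = 0) : ∀ f : M⟦(0:ℤ)⟧ ⟶ X, f = 0 :=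
  zconj ((shiftFunctorZero C ℤ).app M).symm (Iso.refl _) h

lemma presilt_neg {M : C} (hM : ∀ n : ℤ, 0 < n → ∀ f : M ⟶ M⟦n⟧, f = 0)
    (m : ℤ) (hm : m < 0) : ∀ f : M⟦m⟧ ⟶ M, f = 0 := by
  apply zunshift (-m)
  exact zconj (((shiftFunctorCompIsoId C m (-m) (by ring)).app M).symm) (Iso.refl _)
    (hM (-m) (by omega))

lemma addZeroSrc {N Q X : C} (hQ : inAdd N Q) (h : ∀ f : N ⟶ X, f = 0) :
    ∀ f : Q ⟶ X, f = 0 := by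
  obtain ⟨n, i, r, hir⟩ := hQ
  intro f
  have hr : r ≫ f = 0 := by
    apply biproduct.hom_ext'
    intro j
    simp only [comp_zero]
    rw [← Category.assoc]
    exact h _
  calc f = (i ≫ r) ≫ f := by rw [hir, Category.id_comp]
  _ = i ≫ (r ≫ f) := by rw [Category.assoc]
  _ = 0 := by rw [hr, comp_zero]

lemma addZeroTgt {N Q X : C} (hQ : inAdd N Q) (h : ∀ f : X ⟶ N, f = 0) :
    ∀ f : X ⟶ Q, f = 0 := by
  obtain ⟨n, i, r, hir⟩ := hQ
  intro f
  have hr : f ≫ i = 0 := by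
    apply biproduct.hom_ext
    intro j
    simp only [zero_comp, Category.assoc]
    exact h _
  calc f = f ≫ (i ≫ r) := by rw [hir, Category.comp_id]
  _ = (f ≫ i) ≫ r := by rw [Category.assoc]
  _ = 0 := by rw [hr, zero_comp]

lemma addSelf (N : C) (n : ℕ) : inAdd N (⨁ fun _ : Fin n => N) :=
  ⟨n, 𝟙 _, 𝟙 _, Category.id_comp _⟩

lemma addMap (F : C ⥤ C) [F.Additive] {N Q : C} (hQ : inAdd N Q) :
    inAdd (F.obj N) (F.obj Q) := by
  obtain ⟨n, i, r, hir⟩ := hQ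
  refine ⟨n, F.map i ≫ biproduct.lift (fun j => F.map (biproduct.π (fun _ : Fin n => N) j)),
    biproduct.desc (fun j => F.map (biproduct.ι (fun _ : Fin n => N) j)) ≫ F.map r, ?_⟩
  rw [Category.assoc, ← Category.assoc (biproduct.lift _), biproduct.lift_desc]
  have : (∑ j : Fin n, F.map (biproduct.π (fun _ : Fin n => N) j) ≫
      F.map (biproduct.ι (fun _ : Fin n => N) j)) = 𝟙 (F.obj (⨁ fun _ : Fin n => N)) := by
    simp only [← F.map_comp, ← F.map_sum, biproduct.total, F.map_id]
  rw [this, Category.id_comp, ← F.map_comp, hir, F.map_id]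

lemma addIso {N Q Q' : C} (hQ : inAdd N Q) (e : Q ≅ Q') : inAdd N Q' := by
  obtain ⟨n, i, r, hir⟩ := hQ
  exact ⟨n, e.inv ≫ i, r ≫ e.hom, by
    rw [Category.assoc, ← Category.assoc i, hir, Category.id_comp, e.inv_hom_id]⟩

lemma addIsoN {N N' Q : C} (hQ : inAdd N Q) (e : N ≅ N') : inAdd N' Q := by
  obtain ⟨n, i, r, hir⟩ := hQ
  refine ⟨n, i ≫ biproduct.map (fun _ => e.hom), biproduct.map (fun _ => e.inv) ≫ r, ?_⟩
  have hmm : (biproduct.map fun _ : Fin n => e.hom) ≫ (biproduct.map fun _ : Fin n => e.inv)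
      = 𝟙 _ := by
    apply biproduct.hom_ext
    intro j
    simp [biproduct.map_π]
  rw [Category.assoc, ← Category.assoc (biproduct.map _), hmm, Category.id_comp, hir]

lemma addShift (n : ℤ) {N Q : C} (hQ : inAdd N Q) : inAdd (N⟦n⟧) (Q⟦n⟧) :=
  addMap (shiftFunctor C n) hQ

end Helpers
section Helpers2

variable {k : Type u} [Field k]
variable {C : Type u} [Category.{v} C] [Preadditive C] [CategoryTheory.Linear k C]
  [HasZeroObject C] [HasShift C ℤ] [∀ n : ℤ, (CategoryTheory.shiftFunctor C n).Additive]
  [Pretriangulated C] [HasFiniteBiproducts C]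

lemma bound_lemma {M : C} (hM : IsSilting M) (Z : C) :
    ∃ N : ℤ, ∀ X : C, (∀ m : ℤ, m ≤ N → ∀ g : M⟦m⟧ ⟶ X, g = 0) → ∀ f : Z ⟶ X, f = 0 := by
  have hZ := hM.generates Z
  induction hZ with
  | base => exact ⟨0, fun X hX => hv_zero (hX 0 le_rfl)⟩
  | shift W j _ ih =>
      obtain ⟨N, hN⟩ := ih
      refine ⟨N + j, fun X hX => ?_⟩
      have hXj : ∀ m : ℤ, m ≤ N → ∀ g : M⟦m⟧ ⟶ X⟦(-j : ℤ)⟧, g = 0 := by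
        intro m hm
        exact hv_shift (-j) m (fun g => hX (m - -j) (by omega) g)
      have base : ∀ g : W ⟶ X⟦(-j : ℤ)⟧, g = 0 := hN _ hXj
      have shifted : ∀ g : W⟦j⟧ ⟶ X⟦(-j:ℤ)⟧⟦j⟧, g = 0 := zshift j base
      exact zconj (Iso.refl (W⟦j⟧))
        (((shiftFunctorCompIsoId C (-j) j (by ring)).app X).symm) shifted
  | retractOf Z' Y _ hretr ih =>
      obtain ⟨N, hN⟩ := ih
      obtain ⟨i, r, hir⟩ := hretr
      refine ⟨N, fun X hX f => ?_⟩
      calc f = (i ≫ r) ≫ f := by rw [hir, Category.id_comp]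
      _ = i ≫ (r ≫ f) := Category.assoc _ _ _
      _ = 0 := by rw [hN X hX (r ≫ f), comp_zero]
  | ext2 Tr hTr _ _ ih1 ih3 =>
      obtain ⟨N1, hN1⟩ := ih1
      obtain ⟨N3, hN3⟩ := ih3
      refine ⟨max N1 N3, fun X hX f => ?_⟩
      have h1f : Tr.mor₁ ≫ f = 0 :=
        hN1 X (fun m hm => hX m (le_trans hm (le_max_left _ _))) _
      obtain ⟨g, hg⟩ := Triangle.yoneda_exact₂ Tr hTr f h1f
      rw [hg, hN3 X (fun m hm => hX m (le_trans hm (le_max_right _ _))) g, comp_zero]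

lemma approx_exists (hfin : HomFinite k C) (B A : C) :
    ∃ (n : ℕ) (p : (⨁ fun _ : Fin n => B) ⟶ A),
      ∀ g : B ⟶ A, ∃ t : B ⟶ ⨁ (fun _ : Fin n => B), t ≫ p = g := by
  haveI := hfin B A
  let n := Module.finrank k (B ⟶ A)
  let u := Module.finBasis k (B ⟶ A)
  refine ⟨n, biproduct.desc (fun j => u j), fun g => ?_⟩
  refine ⟨∑ j, (u.repr g j) • biproduct.ι (fun _ : Fin n => B) j, ?_⟩
  rw [Preadditive.sum_comp]
  simp only [Linear.smul_comp, biproduct.ι_desc]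
  exact u.sum_repr g

lemma orth_s11 {M : C} (hfin : HomFinite k C) (S : SerreFunctor k C) (hM : IsSilting M)
    {A Y : C} (hA : TleZ M A) (hY : ∀ n : ℤ, 0 ≤ n → ∀ g : M⟦n⟧ ⟶ Y, g = 0) :
    ∀ φ : A ⟶ Y, φ = 0 := by
  intro φ
  obtain ⟨N₀, hN₀⟩ := bound_lemma hM (S.inv.obj Y)
  set j : ℕ := (N₀ + 1).toNat with hj
  have hjN : N₀ < (j : ℤ) := by
    have := Int.self_le_toNat (N₀ + 1)
    omega
  have tower : ∀ t : ℕ, ∃ (A' : C) (θ : A ⟶ A') (ψ : A' ⟶ Y), φ = θ ≫ ψ ∧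
      (∀ m : ℤ, m < (t : ℤ) → ∀ g : M⟦m⟧ ⟶ A', g = 0) := by
    intro t
    induction t with
    | zero =>
        exact ⟨A, 𝟙 A, φ, (Category.id_comp φ).symm,
          fun m hm => hA m (by exact_mod_cast hm)⟩
    | succ t ih =>
        obtain ⟨A', θ, ψ, hfac, hcond⟩ := ih
        obtain ⟨n, p, hp⟩ := approx_exists hfin (M⟦(t : ℤ)⟧) A'
        obtain ⟨A'', σ, w, hdist⟩ := distinguished_cocone_triangle p
        have hpψ : p ≫ ψ = 0 := by
          apply biproduct.hom_ext'
          intro i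
          simp only [comp_zero]
          rw [← Category.assoc]
          exact hY (t : ℤ) (by positivity) _
        obtain ⟨ψ', hψ'⟩ : ∃ ψ' : A'' ⟶ Y, ψ = σ ≫ ψ' := Triangle.yoneda_exact₂ _ hdist ψ hpψ
        refine ⟨A'', θ ≫ σ, ψ', by rw [hfac, show ψ = σ ≫ ψ' from hψ', Category.assoc], ?_⟩
        intro m hm g
        have hm' : m < (t : ℤ) + 1 := by push_cast at hm; omega
        have hgw : g ≫ w = 0 := by
          have hcomp : ∀ f : M⟦m⟧ ⟶ (⨁ fun _ : Fin n => M⟦(t:ℤ)⟧)⟦(1:ℤ)⟧, f = 0 := by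
            apply addZeroTgt (addShift 1 (addSelf (M⟦(t:ℤ)⟧) n))
            apply hv_shift
            apply hv_shift
            exact presilt_neg hM.presilting _ (by omega)
          exact hcomp _
        obtain ⟨g', hg'⟩ : ∃ g' : M⟦m⟧ ⟶ A', g = g' ≫ σ := Triangle.coyoneda_exact₃ _ hdist g hgw
        by_cases hmt : m < (t : ℤ)
        · rw [hg', hcond m hmt g', zero_comp]
        · have hmeq : m = (t : ℤ) := by omega
          subst hmeq
          obtain ⟨tt, htt⟩ := hp g'
          have hps : p ≫ σ = 0 := comp_distTriang_mor_zero₁₂ _ hdist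
          rw [hg', ← htt, Category.assoc]
          rw [hps, comp_zero]
  obtain ⟨A', θ, ψ, hfac, hcond⟩ := tower j
  have hz : ∀ f : S.inv.obj Y ⟶ A', f = 0 := hN₀ A' (fun m hm g => hcond m (by omega) g)
  letI := S.isEquiv
  have hzero : ∀ v : (A' ⟶ S.F.obj (S.inv.obj Y)), v = 0 := by
    intro v
    rw [← Module.forall_dual_apply_eq_zero_iff (R := k)]
    intro ξ
    have hξ : ξ = (S.pairing (S.inv.obj Y) A') ((S.pairing (S.inv.obj Y) A').symm ξ) :=
      ((S.pairing (S.inv.obj Y) A').apply_symm_apply ξ).symm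
    rw [hξ, hz ((S.pairing (S.inv.obj Y) A').symm ξ), map_zero]
    rfl
  have εY : S.F.obj (S.inv.obj Y) ≅ Y := S.F.asEquivalence.counitIso.app Y
  have hψ : ψ = (ψ ≫ εY.inv) ≫ εY.hom := by simp
  rw [hfac, hψ, hzero (ψ ≫ εY.inv), zero_comp, comp_zero]

lemma orth_shift {M : C} (hfin : HomFinite k C) (S : SerreFunctor k C) (hM : IsSilting M)
    {A T : C} (hA : TleZ M A) (hT : TgeZ M T) (m : ℤ) (hm : m ≤ -1) :
    ∀ f : A ⟶ T⟦m⟧, f = 0 :=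
  orth_s11 hfin S hM hA (fun n hn => hv_shift m n (fun g => hT (n - m) (by omega) g))

lemma orth_Tm1 {M : C} (hfin : HomFinite k C) (S : SerreFunctor k C) (hM : IsSilting M)
    {W T' : C} (hW : ∀ n : ℤ, n ≤ 0 → ∀ g : M⟦n⟧ ⟶ W, g = 0) (hT : TgeZ M T') :
    ∀ f : W ⟶ T', f = 0 := by
  apply zunshift (-1 : ℤ)
  apply orth_s11 hfin S hM
  · intro n hn
    exact hv_shift (-1) n (fun g => hW (n - -1) (by omega) g)
  · intro n hn
    exact hv_shift (-1) n (fun g => hT (n - -1) (by omega) g)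

lemma orth_Tm1' {M : C} (hfin : HomFinite k C) (S : SerreFunctor k C) (hM : IsSilting M)
    {W T' : C} (hW : ∀ n : ℤ, n ≤ 0 → ∀ g : M⟦n⟧ ⟶ W, g = 0) (hT : TgeZ M T') :
    ∀ f : W⟦(1:ℤ)⟧ ⟶ T', f = 0 := by
  have base : ∀ f : W ⟶ T'⟦(-1:ℤ)⟧, f = 0 := by
    apply orth_s11 hfin S hM
    · intro n hn
      exact hW n (by omega)
    · intro n hn
      exact hv_shift (-1) n (fun g => hT (n - -1) (by omega) g)
  have shifted : ∀ f : W⟦(1:ℤ)⟧ ⟶ T'⟦(-1:ℤ)⟧⟦(1:ℤ)⟧, f = 0 := zshift 1 base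
  exact zconj (Iso.refl _) (((shiftFunctorCompIsoId C (-1) 1 (by ring)).app T').symm) shifted

end Helpers2
section Helpers3

variable {k : Type u} [Field k]
variable {C : Type u} [Category.{v} C] [Preadditive C] [CategoryTheory.Linear k C]
  [HasZeroObject C] [HasShift C ℤ] [∀ n : ℤ, (CategoryTheory.shiftFunctor C n).Additive]
  [Pretriangulated C] [HasFiniteBiproducts C]

lemma exists_H0 {M : C} (hAdj : HasRightAdjacentTStructure M) {X : C} (hX : TleZ M X) :
    ∃ (W H : C) (wm : W ⟶ X) (q : X ⟶ H) (δ : H ⟶ W⟦(1:ℤ)⟧),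
      Triangle.mk wm q δ ∈ distinguishedTriangles ∧
      (∀ n : ℤ, n ≤ 0 → ∀ g : M⟦n⟧ ⟶ W, g = 0) ∧ inHeart M H := by
  obtain ⟨A₁, B₁, f, g, h, hd, hA₁, hB₁⟩ := hAdj (X⟦(-1:ℤ)⟧)
  have hd1 : (Triangle.shiftFunctor C 1).obj (Triangle.mk f g h) ∈ distinguishedTriangles :=
    Triangle.shift_distinguished _ hd 1
  set U := (Triangle.shiftFunctor C 1).obj (Triangle.mk f g h) with hU
  let e : (X⟦(-1:ℤ)⟧)⟦(1:ℤ)⟧ ≅ X := (shiftFunctorCompIsoId C (-1) 1 (by ring)).app X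
  have hV : Triangle.mk (U.mor₁ ≫ e.hom) (e.inv ≫ U.mor₂) U.mor₃ ∈ distinguishedTriangles := by
    refine isomorphic_distinguished _ hd1 _ ?_
    exact Triangle.isoMk _ U (Iso.refl U.obj₁) e.symm (Iso.refl U.obj₃)
      ((Category.assoc _ _ _).trans ((congrArg _ e.hom_inv_id).trans ((Category.comp_id _).trans (Category.id_comp _).symm)))
      (Category.comp_id _)
      ((congrArg _ ((shiftFunctor C 1).map_id U.obj₁)).trans ((Category.comp_id _).trans (Category.id_comp _).symm))
  refine ⟨A₁⟦(1:ℤ)⟧, B₁⟦(1:ℤ)⟧, U.mor₁ ≫ e.hom, e.inv ≫ U.mor₂, U.mor₃, hV, ?_, ?_, ?_⟩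
  · intro n hn
    exact hv_shift 1 n (fun g' => hA₁ (n - 1) (by omega) g')
  · -- TleZ (B₁⟦1⟧)
    intro n hn g₂
    have hg3 : g₂ ≫ U.mor₃ = 0 := by
      have hz : ∀ f' : M⟦n⟧ ⟶ (A₁⟦(1:ℤ)⟧)⟦(1:ℤ)⟧, f' = 0 :=
        hv_shift 1 n (hv_shift 1 (n-1) (fun g' => hA₁ (n - 1 - 1) (by omega) g'))
      exact hz _
    obtain ⟨g', hg'⟩ : ∃ g' : M⟦n⟧ ⟶ X, g₂ = g' ≫ (e.inv ≫ U.mor₂) :=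
      Triangle.coyoneda_exact₃ _ hV g₂ hg3
    rw [hg', hX n hn g']; exact zero_comp
  · -- TgeZ (B₁⟦1⟧)
    intro n hn
    exact hv_shift 1 n (fun g' => hB₁ (n - 1) (by omega) g')

lemma core {M : C} (hfin : HomFinite k C) (S : SerreFunctor k C) (hM : IsSilting M)
    (hAdj : HasRightAdjacentTStructure M) {S₀ : C} (hS₀ : SimpleInHeart M S₀)
    {P Q : C} (hP : inAdd M P) (hQ : inAdd M Q) (ρ : P ⟶ Q)
    (hrad : ∀ v : Q ⟶ P, IsIso (𝟙 P - ρ ≫ v)) (g : Q ⟶ S₀) : ρ ≫ g = 0 := by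
  by_contra hne
  have hPle : TleZ M P := fun n hn => addZeroTgt hP (presilt_neg hM.presilting n hn)
  obtain ⟨W_P, H_P, wP, qP, δP, hdP, hWP, hHP⟩ := exists_H0 hAdj hPle
  have hWh : wP ≫ (ρ ≫ g) = 0 := orth_Tm1 hfin S hM hWP hS₀.1.2 _
  obtain ⟨hbar₀, hhbar⟩ : ∃ h : H_P ⟶ S₀, ρ ≫ g = qP ≫ h := Triangle.yoneda_exact₂ _ hdP (ρ ≫ g) hWh
  have hhbar' : ρ ≫ g = qP ≫ hbar₀ := hhbar
  have hbar_ne : hbar₀ ≠ 0 := by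
    intro h0
    exact hne (by rw [hhbar', h0, comp_zero])
  rcases hS₀.2.2 H_P hHP hbar₀ with h0 | hepi
  · exact hbar_ne h0
  have hE : ∀ T : C, inHeart M T → ∀ x : S₀ ⟶ T, (ρ ≫ g) ≫ x = 0 → x = 0 := by
    intro T hT x hx
    have hq : qP ≫ (hbar₀ ≫ x) = 0 := by
      rw [← Category.assoc, ← hhbar', hx]
    have hbx : hbar₀ ≫ x = 0 := by
      obtain ⟨y, hy⟩ := Triangle.yoneda_exact₂ _ (rot_of_distTriang _ hdP) (hbar₀ ≫ x) hq
      have hy' : hbar₀ ≫ x = δP ≫ y := hy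
      rw [hy', orth_Tm1' hfin S hM hWP hT.2 y, comp_zero]
    exact hepi T hT x hbx
  obtain ⟨E, w, u, hdE⟩ := distinguished_cocone_triangle (ρ ≫ g)
  have hEle : TleZ M E := by
    intro n hn g₂
    have hg2u : g₂ ≫ u = 0 := by
      have hz : ∀ f' : M⟦n⟧ ⟶ P⟦(1:ℤ)⟧, f' = 0 :=
        addZeroTgt (addShift 1 hP) (hv_shift 1 n (presilt_neg hM.presilting _ (by omega)))
      exact hz _
    obtain ⟨g₃, hg₃⟩ : ∃ g₃ : M⟦n⟧ ⟶ S₀, g₂ = g₃ ≫ w := Triangle.coyoneda_exact₃ _ hdE g₂ hg2u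
    have hg₃' : g₂ = g₃ ≫ w := hg₃
    rw [hg₃', hS₀.1.1 n hn g₃, zero_comp]
  obtain ⟨W_E, H_E, wE, qE, δE, hdE2, hWE, hHE⟩ := exists_H0 hAdj hEle
  have hwq : w ≫ qE = 0 := by
    apply hE H_E hHE
    rw [← Category.assoc]
    have hw0 : (ρ ≫ g) ≫ w = 0 := comp_distTriang_mor_zero₁₂ _ hdE
    rw [hw0, zero_comp]
  obtain ⟨w₀, hw₀⟩ : ∃ w₀ : S₀ ⟶ W_E, w = w₀ ≫ wE := Triangle.coyoneda_exact₂ _ hdE2 w hwq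
  have hw'' : w = w₀ ≫ wE := hw₀
  have hgw : g ≫ w = 0 := by
    rw [hw'', ← Category.assoc]
    have hgz : g ≫ w₀ = 0 := addZeroSrc hQ (hv_zero (hWE 0 le_rfl)) _
    rw [hgz, zero_comp]
  obtain ⟨v₀, hv₀⟩ : ∃ v₀ : Q ⟶ P, g = v₀ ≫ (ρ ≫ g) := Triangle.coyoneda_exact₂ _ hdE g hgw
  let v : Q ⟶ P := v₀
  have hv : g = v ≫ (ρ ≫ g) := hv₀
  have hzero : (𝟙 P - ρ ≫ v) ≫ (ρ ≫ g) = 0 := by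
    rw [Preadditive.sub_comp, Category.id_comp, Category.assoc, ← hv, sub_self]
  haveI := hrad v
  apply hne
  have hfin0 : ρ ≫ g = inv (𝟙 P - ρ ≫ v) ≫ ((𝟙 P - ρ ≫ v) ≫ (ρ ≫ g)) := by
    rw [← Category.assoc, IsIso.inv_hom_id, Category.id_comp]
  rw [hfin0, hzero, comp_zero]

end Helpers3
section Helpers4

variable {k : Type u} [Field k]
variable {C : Type u} [Category.{v} C] [Preadditive C] [CategoryTheory.Linear k C]
  [HasZeroObject C] [HasShift C ℤ] [∀ n : ℤ, (CategoryTheory.shiftFunctor C n).Additive]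
  [Pretriangulated C] [HasFiniteBiproducts C]

lemma keyK {M : C} (hfin : HomFinite k C) (S : SerreFunctor k C) (hM : IsSilting M)
    (hAdj : HasRightAdjacentTStructure M)
    (T : ℕ → C) (MM : ℕ → C) (a : ∀ i, T i ⟶ MM i) (b : ∀ i, MM i ⟶ T (i + 1))
    (c : ∀ i, T (i + 1) ⟶ (T i)⟦(1 : ℤ)⟧)
    (htower : ∀ i : ℕ,
      Triangle.mk (a i) (b i) (c i) ∈ distinguishedTriangles ∧
      TgeZ M (T i) ∧ inAdd (S.F.obj M) (MM i) ∧
      IsMinimalLeftApprox (S.F.obj M) (a i))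
    {S₀ : C} (hS₀ : SimpleInHeart M S₀) (j : ℕ) :
    ∀ f : S₀ ⟶ MM j, f ≫ b j = 0 := by
  letI := S.isEquiv
  haveI : HasBinaryBiproducts C := hasBinaryBiproducts_of_finite_biproducts C
  haveI hFadd : S.F.Additive := Functor.additive_of_preserves_binary_products S.F
  haveI hFadd' : S.F.asEquivalence.functor.Additive := hFadd
  haveI hGadd : S.F.inv.Additive := by
    have h := CategoryTheory.Equivalence.inverse_additive S.F.asEquivalence
    exact h
  intro f
  have hab : a j ≫ b j = 0 := comp_distTriang_mor_zero₁₂ _ (htower j).1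
  set r : MM j ⟶ MM (j + 1) := b j ≫ a (j + 1) with hr
  have hradr : ∀ u : MM (j + 1) ⟶ MM j, IsIso (𝟙 (MM j) - r ≫ u) := by
    intro u
    apply (htower j).2.2.2.2
    have hz : a j ≫ (r ≫ u) = 0 := by
      rw [hr]
      calc a j ≫ (b j ≫ a (j + 1)) ≫ u = ((a j ≫ b j) ≫ a (j + 1)) ≫ u := by
            simp only [Category.assoc]
      _ = 0 := by rw [hab, zero_comp, zero_comp]
    rw [Preadditive.comp_sub, Category.comp_id, hz, sub_zero]
  set G := S.F.inv with hG
  set P := G.obj (MM j) with hPdef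
  set Qq := G.obj (MM (j + 1)) with hQdef
  set ρ := G.map r with hρ
  have hP : inAdd M P :=
    addIsoN (addMap G (htower j).2.2.1) (S.F.asEquivalence.unitIso.app M).symm
  have hQ : inAdd M Qq :=
    addIsoN (addMap G (htower (j + 1)).2.2.1) (S.F.asEquivalence.unitIso.app M).symm
  let εj : S.F.obj P ≅ MM j := S.F.asEquivalence.counitIso.app (MM j)
  let εj1 : S.F.obj Qq ≅ MM (j + 1) := S.F.asEquivalence.counitIso.app (MM (j + 1))
  have hnat : S.F.map ρ ≫ εj1.hom = εj.hom ≫ r := by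
    have hn := S.F.asEquivalence.counitIso.hom.naturality r
    exact hn
  have hradρ : ∀ v : Qq ⟶ P, IsIso (𝟙 P - ρ ≫ v) := by
    intro v
    set u : MM (j + 1) ⟶ MM j := εj1.inv ≫ S.F.map v ≫ εj.hom with hu
    have h2 : εj.hom ≫ (r ≫ u) ≫ εj.inv = S.F.map ρ ≫ S.F.map v := by
      calc εj.hom ≫ (r ≫ u) ≫ εj.inv = (εj.hom ≫ r) ≫ u ≫ εj.inv := by
            simp only [Category.assoc]
      _ = (S.F.map ρ ≫ εj1.hom) ≫ (εj1.inv ≫ S.F.map v ≫ εj.hom) ≫ εj.inv := by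
            rw [← hnat, hu]
      _ = S.F.map ρ ≫ S.F.map v := by simp
    have h3 : εj.hom ≫ (𝟙 (MM j) - r ≫ u) ≫ εj.inv = S.F.map (𝟙 P - ρ ≫ v) := by
      rw [CategoryTheory.Functor.map_sub, CategoryTheory.Functor.map_id, CategoryTheory.Functor.map_comp]
      rw [Preadditive.sub_comp, Preadditive.comp_sub, Category.id_comp, Iso.hom_inv_id, h2]
    haveI := hradr u
    have h4 : IsIso (εj.hom ≫ (𝟙 (MM j) - r ≫ u) ≫ εj.inv) := by
      infer_instance
    rw [h3] at h4
    exact isIso_of_reflects_iso (𝟙 P - ρ ≫ v) S.F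
  have hcore : ∀ g' : Qq ⟶ S₀, ρ ≫ g' = 0 := fun g' =>
    core hfin S hM hAdj hS₀ hP hQ ρ hradρ g'
  have hfr : f ≫ r = 0 := by
    have harg : (f ≫ εj.inv) ≫ S.F.map ρ = f ≫ r ≫ εj1.inv := by
      have h5 : εj.inv ≫ S.F.map ρ = r ≫ εj1.inv := by
        have h6 : S.F.map ρ = εj.hom ≫ r ≫ εj1.inv := by
          rw [← Category.assoc, ← hnat]; simp
        rw [h6]
        simp
      rw [Category.assoc, h5]
    have hkey : ∀ ξ : Module.Dual k (S₀ ⟶ S.F.obj Qq), ξ (f ≫ r ≫ εj1.inv) = 0 := by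
      intro ξ
      have hξ : ξ = S.pairing Qq S₀ ((S.pairing Qq S₀).symm ξ) :=
        ((S.pairing Qq S₀).apply_symm_apply ξ).symm
      set g₀ := (S.pairing Qq S₀).symm ξ with hg₀
      have hnl := S.natural_left ρ g₀ (f ≫ εj.inv)
      rw [hcore g₀, map_zero, LinearMap.zero_apply] at hnl
      rw [hξ, ← harg]
      exact hnl.symm
    have hz2 : f ≫ r ≫ εj1.inv = 0 :=
      (Module.forall_dual_apply_eq_zero_iff (R := k) _).mp hkey
    calc f ≫ r = (f ≫ r ≫ εj1.inv) ≫ εj1.hom := by simp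
    _ = 0 := by rw [hz2, zero_comp]
  have hcomp : (f ≫ b j) ≫ a (j + 1) = 0 := by
    rw [Category.assoc, ← hr]
    exact hfr
  obtain ⟨g₂, hg₂⟩ := Triangle.coyoneda_exact₂ _
    (inv_rot_of_distTriang _ (htower (j + 1)).1) (f ≫ b j) (by exact hcomp)
  have hg₂z : g₂ = 0 :=
    orth_shift hfin S hM hS₀.1.1 (htower (j + 2)).2.1 (-1) le_rfl g₂
  rw [hg₂z] at hg₂; exact hg₂.trans zero_comp

end Helpers4
section Helpers5

variable {k : Type u} [Field k]
variable {C : Type u} [Category.{v} C] [Preadditive C] [CategoryTheory.Linear k C]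
  [HasZeroObject C] [HasShift C ℤ] [∀ n : ℤ, (CategoryTheory.shiftFunctor C n).Additive]
  [Pretriangulated C] [HasFiniteBiproducts C]

lemma mmvan {M : C} (S : SerreFunctor k C)
    {S₀ : C} (hle : TleZ M S₀) (hge : TgeZ M S₀)
    {X : C} (hX : inAdd (S.F.obj M) X) (m : ℤ) (hm : m ≠ 0) :
    ∀ f : S₀ ⟶ X⟦m⟧, f = 0 := by
  apply addZeroTgt (addShift m hX)
  have hbase : ∀ f₀ : S₀⟦(-m : ℤ)⟧ ⟶ S.F.obj M, f₀ = 0 := by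
    have hM0 : ∀ g : M ⟶ S₀⟦(-m : ℤ)⟧, g = 0 := by
      apply hv_zero
      apply hv_shift (-m) 0
      intro g
      rcases lt_or_gt_of_ne hm with h1 | h2
      · exact hle (0 - -m) (by omega) g
      · exact hge (0 - -m) (by omega) g
    intro f₀
    rw [← Module.forall_dual_apply_eq_zero_iff (R := k)]
    intro ξ
    have hξ : ξ = S.pairing M (S₀⟦(-m : ℤ)⟧) ((S.pairing M (S₀⟦(-m : ℤ)⟧)).symm ξ) :=
      ((S.pairing M (S₀⟦(-m : ℤ)⟧)).apply_symm_apply ξ).symm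
    rw [hξ, hM0 ((S.pairing M (S₀⟦(-m : ℤ)⟧)).symm ξ), map_zero, LinearMap.zero_apply]
  exact zconj ((shiftFunctorCompIsoId C (-m) m (by ring)).app S₀) (Iso.refl _)
    (zshift m hbase)

noncomputable def homCongr (X : C) {A B : C} (e : A ≅ B) : (X ⟶ A) ≃ₗ[k] (X ⟶ B) :=
  LinearEquiv.ofLinear (Linear.rightComp k X e.hom) (Linear.rightComp k X e.inv)
    (by ext f; simp) (by ext f; simp)

lemma bij_mor1 {U : Triangle C} (hU : U ∈ distinguishedTriangles) {X : C}
    (h1 : ∀ g : X ⟶ U.obj₃⟦(-1 : ℤ)⟧, g = 0)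
    (hker : ∀ g : X ⟶ U.obj₂, g ≫ U.mor₂ = 0) :
    Function.Bijective (fun f : X ⟶ U.obj₁ => f ≫ U.mor₁) := by
  constructor
  · intro x y hxy
    have hsub : (x - y) ≫ U.mor₁ = 0 := by
      rw [Preadditive.sub_comp]
      dsimp at hxy
      rw [hxy, sub_self]
    obtain ⟨g, hg⟩ := Triangle.coyoneda_exact₂ _ (inv_rot_of_distTriang _ hU) (x - y)
      (by exact hsub)
    have hg0 : g = 0 := h1 g
    rw [hg0, zero_comp] at hg
    exact sub_eq_zero.mp hg
  · intro y
    obtain ⟨g, hg⟩ := Triangle.coyoneda_exact₂ _ hU y (hker y)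
    exact ⟨g, hg.symm⟩

lemma bij_mor3 {U : Triangle C} (hU : U ∈ distinguishedTriangles) {X : C}
    (h2' : ∀ g : X ⟶ U.obj₂⟦(1 : ℤ)⟧, g = 0)
    (hker : ∀ g : X ⟶ U.obj₂, g ≫ U.mor₂ = 0) :
    Function.Bijective (fun f : X ⟶ U.obj₃ => f ≫ U.mor₃) := by
  constructor
  · intro x y hxy
    have hsub : (x - y) ≫ U.mor₃ = 0 := by
      rw [Preadditive.sub_comp]
      dsimp at hxy
      rw [hxy, sub_self]
    obtain ⟨g, hg⟩ := Triangle.coyoneda_exact₃ _ hU (x - y) hsub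
    rw [hker g] at hg
    exact sub_eq_zero.mp hg
  · intro y
    have hy3 : y ≫ (U.rotate).mor₃ = 0 := h2' _
    obtain ⟨g, hg⟩ := Triangle.coyoneda_exact₃ _ (rot_of_distTriang _ hU) y hy3
    exact ⟨g, hg.symm⟩

end Helpers5
/-- for a simple `S₀` of the heart and a minimal `(add νM)`-coresolution
tower of `T₀ ∈ T_M^{≥0}`, `T(S₀, T₀[i]) ≅ T(S₀, νM^i)`. -/
theorem statement11 {k : Type u} [Field k]
    {C : Type u} [Category.{v} C] [Preadditive C] [CategoryTheory.Linear k C]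
    [HasZeroObject C] [HasShift C ℤ] [∀ n : ℤ, (CategoryTheory.shiftFunctor C n).Additive]
    [Pretriangulated C] [HasFiniteBiproducts C]
    (hfin : HomFinite k C) (hKS : KrullSchmidt (C := C))
    (S : SerreFunctor k C) (M : C) (hM : IsSilting M)
    (hAdj : HasRightAdjacentTStructure M)
    (T : ℕ → C) (MM : ℕ → C) (a : ∀ i, T i ⟶ MM i) (b : ∀ i, MM i ⟶ T (i + 1))
    (c : ∀ i, T (i + 1) ⟶ (T i)⟦(1 : ℤ)⟧)
    (htower : ∀ i : ℕ,
      Triangle.mk (a i) (b i) (c i) ∈ distinguishedTriangles ∧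
      TgeZ M (T i) ∧ inAdd (S.F.obj M) (MM i) ∧
      IsMinimalLeftApprox (S.F.obj M) (a i))
    (S₀ : C) (hS₀ : SimpleInHeart M S₀) :
    ∀ i : ℕ, Nonempty ((S₀ ⟶ (T 0)⟦(i : ℤ)⟧) ≃ₗ[k] (S₀ ⟶ MM i)) := by
  have hle := hS₀.1.1
  have hge := hS₀.1.2
  have hK : ∀ j : ℕ, ∀ f : S₀ ⟶ MM j, f ≫ b j = 0 :=
    keyK hfin S hM hAdj T MM a b c htower hS₀
  have hmm : ∀ (j : ℕ) (m : ℤ), m ≠ 0 → ∀ f : S₀ ⟶ (MM j)⟦m⟧, f = 0 := fun j m hm =>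
    mmvan S hle hge (htower j).2.2.1 m hm
  have base : ∀ j : ℕ, Nonempty ((S₀ ⟶ T j) ≃ₗ[k] (S₀ ⟶ MM j)) := by
    intro j
    have hbij : Function.Bijective
        (fun f : S₀ ⟶ (Triangle.mk (a j) (b j) (c j)).obj₁ =>
          f ≫ (Triangle.mk (a j) (b j) (c j)).mor₁) := by
      apply bij_mor1 (htower j).1
      · intro g
        exact orth_shift hfin S hM hle (htower (j + 1)).2.1 (-1) le_rfl g
      · intro g
        exact hK j g
    exact ⟨LinearEquiv.ofBijective (Linear.rightComp k S₀ (a j)) hbij⟩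
  have step1 : ∀ j : ℕ, Nonempty ((S₀ ⟶ T (j + 1)) ≃ₗ[k] (S₀ ⟶ (T j)⟦(1 : ℤ)⟧)) := by
    intro j
    have hbij : Function.Bijective
        (fun f : S₀ ⟶ (Triangle.mk (a j) (b j) (c j)).obj₃ =>
          f ≫ (Triangle.mk (a j) (b j) (c j)).mor₃) := by
      apply bij_mor3 (htower j).1
      · intro g
        exact hmm j 1 one_ne_zero g
      · intro g
        exact hK j g
    exact ⟨LinearEquiv.ofBijective (Linear.rightComp k S₀ (c j)) hbij⟩
  have step2 : ∀ (j : ℕ) (n : ℤ), 0 < n →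
      Nonempty ((S₀ ⟶ (T (j + 1))⟦n⟧) ≃ₗ[k] (S₀ ⟶ ((T j)⟦n⟧)⟦(1 : ℤ)⟧)) := by
    intro j n hn
    set U := (Triangle.shiftFunctor C n).obj (Triangle.mk (a j) (b j) (c j)) with hUdef
    have hUd : U ∈ distinguishedTriangles :=
      Triangle.shift_distinguished _ (htower j).1 n
    have hbij : Function.Bijective (fun f : S₀ ⟶ U.obj₃ => f ≫ U.mor₃) := by
      apply bij_mor3 hUd
      · intro g
        have hzz : ∀ g' : S₀ ⟶ (MM j)⟦n + 1⟧, g' = 0 := hmm j (n + 1) (by omega)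
        exact zconj (Iso.refl S₀)
          (((shiftFunctorAdd' C n 1 (n + 1) rfl).app (MM j)).symm) hzz g
      · intro g
        have hg0 : g = 0 := hmm j n (by omega) g
        rw [hg0, zero_comp]
    exact ⟨LinearEquiv.ofBijective (Linear.rightComp k S₀ U.mor₃) hbij⟩
  have main : ∀ (d : ℕ) (j : ℕ),
      Nonempty ((S₀ ⟶ (T j)⟦(d : ℤ)⟧) ≃ₗ[k] (S₀ ⟶ MM (j + d))) := by
    intro d
    induction d with
    | zero =>
        intro j
        obtain ⟨e⟩ := base j
        have ecast : (T j)⟦((0 : ℕ) : ℤ)⟧ ≅ T j :=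
          eqToIso (by norm_num) ≪≫ (shiftFunctorZero C ℤ).app (T j)
        exact ⟨(homCongr S₀ ecast).trans e⟩
    | succ d ih =>
        intro j
        obtain ⟨e1⟩ := ih (j + 1)
        by_cases hd : d = 0
        · subst hd
          obtain ⟨e0⟩ := step1 j
          obtain ⟨eb⟩ := base (j + 1)
          have ecast : (T j)⟦((0 + 1 : ℕ) : ℤ)⟧ ≅ (T j)⟦(1 : ℤ)⟧ := eqToIso (by norm_num)
          exact ⟨((homCongr S₀ ecast).trans e0.symm).trans eb⟩
        · obtain ⟨e2⟩ := step2 j (d : ℤ) (by omega)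
          have ecast : (T j)⟦((d + 1 : ℕ) : ℤ)⟧ ≅ ((T j)⟦(d : ℤ)⟧)⟦(1 : ℤ)⟧ :=
            eqToIso (by norm_cast) ≪≫ (shiftFunctorAdd' C (d : ℤ) 1 ((d : ℤ) + 1) rfl).app (T j)
          have emm : MM (j + 1 + d) ≅ MM (j + (d + 1)) := eqToIso (congrArg MM (by omega))
          exact ⟨(((homCongr S₀ ecast).trans e2.symm).trans e1).trans (homCongr S₀ emm)⟩
  intro i
  obtain ⟨e⟩ := main i 0
  exact ⟨e.trans (homCongr S₀ (eqToIso (congrArg MM (Nat.zero_add i))))⟩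
end
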